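/- arXiv:2004.08625 — 8 statements merged into one kernel-verified Lean document; each statement's English description precedes it below -/
import Mathlib

section
/- If f(z) = Σ_{k=0}^∞ a_k z^k is analytic on the open unit disk and |f(z)| ≤ 1 there, then Σ_{k=0}^∞ |a_k| r^k ≤ 1 for all 0 ≤ r ≤ 1/3. -/
/-!
For `ρ < 1` the Fourier coefficients of `θ ↦ f (ρ e^{iθ})` are `a k ρ ^ k` in degree `k ≥ 0`
and vanish in negative degrees. When `Re f ≤ 1`, integrating the nonnegative function
`1 - Re f (ρ e^{iθ})` against `e^{-ikθ}` and letting `ρ → 1` gives Carathéodory's inequality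
`‖a k‖ ≤ 2 (1 - Re a 0)` for `k ≥ 1`; rotating `f` so that `a 0 ≥ 0` turns it into
`‖a k‖ ≤ 2 (1 - ‖a 0‖)`. Hence `∑ ‖a k‖ r ^ k ≤ ‖a 0‖ + 2 (1 - ‖a 0‖) r / (1 - r) ≤ 1`,
since `r / (1 - r) ≤ 1 / 2` for `r ≤ 1 / 3`.
-/

open Real Complex ComplexConjugate Metric Filter Topology

theorem integral_exp_int_mul_mul_I (m : ℤ) :
    ∫ θ in (0)..2 * π, exp (m * θ * I) = if m = 0 then (2 * π : ℂ) else 0 := by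
  split_ifs with hm
  · simp [hm]
  have hmI : (m : ℂ) * I ≠ 0 := by simp [hm, I_ne_zero]
  simp_rw [mul_right_comm _ _ I]
  rw [integral_exp_mul_complex hmI, div_eq_zero_iff, sub_eq_zero]
  left
  push_cast
  rw [show (m : ℂ) * I * (2 * π) = m * (2 * π * I) by ring, exp_int_mul_two_pi_mul_I]
  simp

theorem norm_exp_int_mul_mul_I (m : ℤ) (θ : ℝ) : ‖exp (m * θ * I)‖ = 1 := by
  rw [← ofReal_intCast, ← ofReal_mul, norm_exp_ofReal_mul_I]

theorem summable_norm_mul_pow_of_summable {𝕜 : Type*} [NormedField 𝕜] {a : ℕ → 𝕜} {z : 𝕜}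
    (h : Summable fun n ↦ a n * z ^ n) {ρ : ℝ} (hρ : 0 ≤ ρ) (hρz : ρ < ‖z‖) :
    Summable fun n ↦ ‖a n‖ * ρ ^ n := by
  have hz : 0 < ‖z‖ := hρ.trans_lt hρz
  obtain ⟨C, hC⟩ := h.tendsto_atTop_zero.norm.bddAbove_range
  refine .of_nonneg_of_le (fun n ↦ by positivity) (fun n ↦ ?_)
    ((summable_geometric_of_lt_one (by positivity) ((div_lt_one hz).2 hρz)).mul_left C)
  calc ‖a n‖ * ρ ^ n = ‖a n * z ^ n‖ * (ρ / ‖z‖) ^ n := by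
        rw [norm_mul, norm_pow, div_pow]; field_simp
    _ ≤ C * (ρ / ‖z‖) ^ n := by gcongr; exact hC ⟨n, rfl⟩

section CircleFourier

variable {f : ℂ → ℂ} {a : ℕ → ℂ} {ρ : ℝ}

theorem hasSum_integral_comp_circleMap_mul_exp (hρ : 0 ≤ ρ)
    (hs : Summable fun n ↦ ‖a n‖ * ρ ^ n)
    (hf : ∀ θ, HasSum (fun n ↦ a n * circleMap 0 ρ θ ^ n) (f (circleMap 0 ρ θ))) (m : ℤ) :
    HasSum (fun n : ℕ ↦ a n * ρ ^ n * ∫ θ in (0)..2 * π, exp ((n + m : ℤ) * θ * I))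
      (∫ θ in (0)..2 * π, f (circleMap 0 ρ θ) * exp (m * θ * I)) := by
  have hterm : ∀ n : ℕ, ∀ θ : ℝ, a n * circleMap 0 ρ θ ^ n * exp (m * θ * I) =
      a n * ρ ^ n * exp ((n + m : ℤ) * θ * I) := by
    intro n θ
    rw [circleMap_zero, mul_pow, ← Complex.exp_nat_mul, mul_assoc, mul_assoc, mul_assoc,
      ← Complex.exp_add]
    push_cast
    ring_nf
  simp_rw [← intervalIntegral.integral_const_mul, ← hterm]
  refine intervalIntegral.hasSum_integral_of_dominated_convergence (fun n _ ↦ ‖a n‖ * ρ ^ n)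
    (fun n ↦ by fun_prop) (fun n ↦ .of_forall fun θ _ ↦ ?_) (.of_forall fun _ _ ↦ hs)
    intervalIntegrable_const (.of_forall fun θ _ ↦ (hf θ).mul_right _)
  rw [norm_mul, norm_mul, norm_pow, norm_circleMap_zero, abs_of_nonneg hρ,
    norm_exp_int_mul_mul_I, mul_one]

theorem integral_comp_circleMap_mul_exp_neg (hρ : 0 ≤ ρ)
    (hs : Summable fun n ↦ ‖a n‖ * ρ ^ n)
    (hf : ∀ θ, HasSum (fun n ↦ a n * circleMap 0 ρ θ ^ n) (f (circleMap 0 ρ θ))) (k : ℕ) :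
    ∫ θ in (0)..2 * π, f (circleMap 0 ρ θ) * exp (-k * θ * I) = 2 * π * a k * ρ ^ k := by
  have h := hasSum_integral_comp_circleMap_mul_exp hρ hs hf (-k)
  simp only [integral_exp_int_mul_mul_I, add_neg_eq_zero, Nat.cast_inj, Int.cast_neg,
    Int.cast_natCast, mul_ite, mul_zero] at h
  refine h.unique ?_
  convert hasSum_ite_eq k (2 * π * a k * ρ ^ k) using 2 with n
  split_ifs with hn
  · rw [hn]; ring
  · rfl

theorem integral_comp_circleMap_mul_exp_eq_zero (hρ : 0 ≤ ρ)
    (hs : Summable fun n ↦ ‖a n‖ * ρ ^ n)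
    (hf : ∀ θ, HasSum (fun n ↦ a n * circleMap 0 ρ θ ^ n) (f (circleMap 0 ρ θ))) {k : ℕ}
    (hk : k ≠ 0) : ∫ θ in (0)..2 * π, f (circleMap 0 ρ θ) * exp (k * θ * I) = 0 := by
  have h := hasSum_integral_comp_circleMap_mul_exp hρ hs hf k
  simp only [integral_exp_int_mul_mul_I, Int.cast_natCast] at h
  refine h.unique ?_
  convert hasSum_zero with n
  rw [if_neg (by omega), mul_zero]

end CircleFourier

theorem norm_integral_mul_exp_neg_le {g : ℝ → ℂ} (hg : Continuous g) (hre : ∀ θ, (g θ).re ≤ 1)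
    {k : ℕ} (hk : k ≠ 0) (hvanish : ∫ θ in (0)..2 * π, g θ * exp (k * θ * I) = 0) :
    ‖∫ θ in (0)..2 * π, g θ * exp (-k * θ * I)‖ ≤ 2 * (2 * π - (∫ θ in (0)..2 * π, g θ).re) := by
  have hexp : ∫ θ in (0)..2 * π, exp (-k * θ * I) = 0 := by
    simpa [hk] using integral_exp_int_mul_mul_I (-k)
  -- `Re w = (w + conj w) / 2`, and the conjugate term integrates to `conj` of `hvanish`.
  have hsplit : ∀ θ : ℝ, ((1 - (g θ).re : ℝ) : ℂ) * exp (-k * θ * I) =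
      exp (-k * θ * I) - g θ * exp (-k * θ * I) / 2 - conj (g θ * exp (k * θ * I)) / 2 := by
    intro θ
    rw [ofReal_sub, ofReal_one, re_eq_add_conj, map_mul, ← exp_conj]
    simp only [map_mul, map_natCast, conj_ofReal, conj_I]
    ring_nf
  have hu_coeff : ∫ θ in (0)..2 * π, ((1 - (g θ).re : ℝ) : ℂ) * exp (-k * θ * I) =
      -(∫ θ in (0)..2 * π, g θ * exp (-k * θ * I)) / 2 := by
    simp_rw [hsplit]
    rw [intervalIntegral.integral_sub (Continuous.intervalIntegrable (by fun_prop) _ _)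
      (Continuous.intervalIntegrable (by fun_prop) _ _), intervalIntegral.integral_sub
      (Continuous.intervalIntegrable (by fun_prop) _ _)
      (Continuous.intervalIntegrable (by fun_prop) _ _), intervalIntegral.integral_div,
      intervalIntegral.integral_div, intervalIntegral.intervalIntegral_conj, hvanish, hexp]
    simp [neg_div]
  have hmass : ∫ θ in (0)..2 * π, (1 - (g θ).re) = 2 * π - (∫ θ in (0)..2 * π, g θ).re := by
    rw [intervalIntegral.integral_sub intervalIntegrable_const
      (Continuous.intervalIntegrable (by fun_prop) _ _), intervalIntegral.integral_const,
      ← reCLM_apply, ← reCLM.intervalIntegral_comp_comm (hg.intervalIntegrable _ _)]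
    simp
  calc ‖∫ θ in (0)..2 * π, g θ * exp (-k * θ * I)‖
      = 2 * ‖∫ θ in (0)..2 * π, ((1 - (g θ).re : ℝ) : ℂ) * exp (-k * θ * I)‖ := by
        rw [hu_coeff, norm_div, norm_neg, RCLike.norm_ofNat]; ring
    _ ≤ 2 * ∫ θ in (0)..2 * π, ‖((1 - (g θ).re : ℝ) : ℂ) * exp (-k * θ * I)‖ := by
        gcongr; exact intervalIntegral.norm_integral_le_integral_norm (by positivity)
    _ = 2 * (2 * π - (∫ θ in (0)..2 * π, g θ).re) := by
        rw [← hmass]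
        congr 1
        refine intervalIntegral.integral_congr fun θ _ ↦ ?_
        rw [norm_mul, ← Int.cast_natCast, ← Int.cast_neg, norm_exp_int_mul_mul_I, mul_one,
          norm_real, Real.norm_of_nonneg (sub_nonneg.2 (hre θ))]

section Caratheodory

variable {f : ℂ → ℂ} {a : ℕ → ℂ}

theorem norm_coeff_mul_pow_le (hf : ContinuousOn f (ball 0 1))
    (hrep : ∀ z ∈ ball (0 : ℂ) 1, HasSum (fun n ↦ a n * z ^ n) (f z))
    (hre : ∀ z ∈ ball (0 : ℂ) 1, (f z).re ≤ 1) {ρ : ℝ} (hρ0 : 0 ≤ ρ) (hρ1 : ρ < 1) {k : ℕ}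
    (hk : k ≠ 0) : ‖a k‖ * ρ ^ k ≤ 2 * (1 - (a 0).re) := by
  have hmem : ∀ θ, circleMap 0 ρ θ ∈ ball (0 : ℂ) 1 := fun θ ↦ by
    simpa [abs_of_nonneg hρ0] using hρ1
  obtain ⟨ρ', hρρ', hρ'1⟩ := exists_between hρ1
  have hs : Summable fun n ↦ ‖a n‖ * ρ ^ n :=
    summable_norm_mul_pow_of_summable
      (hrep ρ' (by simpa [abs_of_pos (hρ0.trans_lt hρρ')])).summable hρ0
      (by simpa [abs_of_pos (hρ0.trans_lt hρρ')])
  have hser θ := hrep _ (hmem θ)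
  have hcara := norm_integral_mul_exp_neg_le (g := fun θ ↦ f (circleMap 0 ρ θ))
    (hf.comp_continuous (continuous_circleMap 0 ρ) hmem) (fun θ ↦ hre _ (hmem θ)) hk
    (integral_comp_circleMap_mul_exp_eq_zero hρ0 hs hser hk)
  have h0 := integral_comp_circleMap_mul_exp_neg hρ0 hs hser 0
  simp only [CharP.cast_eq_zero, neg_zero, zero_mul, Complex.exp_zero, mul_one, pow_zero] at h0
  rw [integral_comp_circleMap_mul_exp_neg hρ0 hs hser k, h0] at hcara
  have hre0 : (2 * π * a 0).re = 2 * π * (a 0).re := by simp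
  rw [norm_mul, norm_mul, norm_pow, norm_real, Real.norm_of_nonneg hρ0, hre0,
    norm_mul, RCLike.norm_ofNat, norm_real, Real.norm_of_nonneg pi_pos.le] at hcara
  nlinarith [pi_pos]

theorem norm_coeff_le_two_mul_one_sub_re (hf : ContinuousOn f (ball 0 1))
    (hrep : ∀ z ∈ ball (0 : ℂ) 1, HasSum (fun n ↦ a n * z ^ n) (f z))
    (hre : ∀ z ∈ ball (0 : ℂ) 1, (f z).re ≤ 1) {k : ℕ} (hk : k ≠ 0) :
    ‖a k‖ ≤ 2 * (1 - (a 0).re) := by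
  have hlim : Tendsto (fun ρ : ℝ ↦ ‖a k‖ * ρ ^ k) (𝓝[<] 1) (𝓝 (‖a k‖ * 1 ^ k)) :=
    ((continuous_const.mul (continuous_pow k)).tendsto 1).mono_left nhdsWithin_le_nhds
  rw [one_pow, mul_one] at hlim
  refine le_of_tendsto hlim ?_
  filter_upwards [Ioo_mem_nhdsLT zero_lt_one] with ρ hρ
  exact norm_coeff_mul_pow_le hf hrep hre hρ.1.le hρ.2 hk

end Caratheodory

theorem exists_norm_eq_one_mul_eq_norm (z : ℂ) : ∃ μ : ℂ, ‖μ‖ = 1 ∧ μ * z = ‖z‖ := by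
  refine ⟨exp (-(arg z : ℂ) * I), by rw [← ofReal_neg, norm_exp_ofReal_mul_I], ?_⟩
  calc exp (-(arg z : ℂ) * I) * z = exp (-(arg z : ℂ) * I) * (‖z‖ * exp (arg z * I)) := by
        rw [norm_mul_exp_arg_mul_I]
    _ = ‖z‖ := by
        rw [mul_left_comm, ← Complex.exp_add, neg_mul, neg_add_cancel, Complex.exp_zero, mul_one]

theorem tsum_mul_pow_le_one {b : ℕ → ℝ} (hb : ∀ k, 0 ≤ b k)
    (hbk : ∀ k ≠ 0, b k ≤ 2 * (1 - b 0)) {r : ℝ} (hr0 : 0 ≤ r) (hr : r ≤ 1 / 3) :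
    ∑' k, b k * r ^ k ≤ 1 := by
  have hb0 : b 0 ≤ 1 := by linarith [hb 1, hbk 1 one_ne_zero]
  have hr1 : r < 1 := by linarith
  -- `b 0` at `k = 0`, the geometric series `2 (1 - b 0) r ^ k` afterwards
  have hmaj : HasSum (fun k ↦ 2 * (1 - b 0) * r ^ k + if k = 0 then 3 * b 0 - 2 else 0)
      (2 * (1 - b 0) * (1 - r)⁻¹ + (3 * b 0 - 2)) :=
    ((hasSum_geometric_of_lt_one hr0 hr1).mul_left _).add (hasSum_ite_eq 0 _)
  have hle : ∀ k, b k * r ^ k ≤ 2 * (1 - b 0) * r ^ k + if k = 0 then 3 * b 0 - 2 else 0 := by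
    intro k
    split_ifs with hk
    · subst hk; simp only [pow_zero, mul_one]; linarith
    · rw [add_zero]; gcongr; exact hbk k hk
  have hsum : Summable fun k ↦ b k * r ^ k :=
    .of_nonneg_of_le (fun k ↦ mul_nonneg (hb k) (pow_nonneg hr0 k)) hle hmaj.summable
  calc ∑' k, b k * r ^ k ≤ 2 * (1 - b 0) * (1 - r)⁻¹ + (3 * b 0 - 2) :=
        hasSum_le hle hsum.hasSum hmaj
    _ ≤ 2 * (1 - b 0) * (3 / 2) + (3 * b 0 - 2) := by
        gcongr
        rw [inv_le_comm₀ (by linarith) (by norm_num)]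
        linarith
    _ = 1 := by ring

/-- Classical Bohr inequality: if `f(z) = Σ a_k z^k` is analytic on the unit disk
with `|f| ≤ 1`, then `Σ |a_k| r^k ≤ 1` for `0 ≤ r ≤ 1/3`. -/
theorem bohr_inequality (f : ℂ → ℂ) (a : ℕ → ℂ)
    (hf : AnalyticOn ℂ f (Metric.ball (0 : ℂ) 1))
    (hrep : ∀ z ∈ Metric.ball (0 : ℂ) 1, HasSum (fun k : ℕ => a k * z ^ k) (f z))
    (hbd : ∀ z ∈ Metric.ball (0 : ℂ) 1, ‖f z‖ ≤ 1)
    (r : ℝ) (hr0 : 0 ≤ r) (hr : r ≤ 1 / 3) :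
    ∑' k : ℕ, ‖a k‖ * r ^ k ≤ 1 := by
  obtain ⟨μ, hμ, hμa⟩ := exists_norm_eq_one_mul_eq_norm (a 0)
  have hcoeff : ∀ k ≠ 0, ‖a k‖ ≤ 2 * (1 - ‖a 0‖) := by
    intro k hk
    have hrot : ∀ z ∈ ball (0 : ℂ) 1, HasSum (fun n ↦ μ * a n * z ^ n) (μ * f z) :=
      fun z hz ↦ by simpa only [mul_assoc] using (hrep z hz).mul_left μ
    have hre : ∀ z ∈ ball (0 : ℂ) 1, (μ * f z).re ≤ 1 := fun z hz ↦
      (re_le_norm _).trans (by rw [norm_mul, hμ, one_mul]; exact hbd z hz)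
    simpa [hμ, hμa] using
      norm_coeff_le_two_mul_one_sub_re (continuousOn_const.mul hf.continuousOn) hrot hre hk
  exact tsum_mul_pow_le_one (fun k ↦ norm_nonneg _) hcoeff hr0 hr
end

section
/- The constant 1/3 in Bohr's inequality is sharp: for every r > 1/3 there exists an analytic f : D → D with power series Σ a_k z^k such that Σ |a_k| r^k > 1. -/
/-!
The disc automorphism `(a - z) / (1 - conj a * z)` has Taylor coefficients
`a, (|a|² - 1), (|a|² - 1) conj a, (|a|² - 1) (conj a)², …`, so with `t = |a|` its Bohr sum at
radius `r` is `t + (1 - t²) r / (1 - t r)`. This exceeds `1` exactly when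
`(1 - t) (r (1 + 2t) - 1) > 0`, and for `r > 1/3` that holds once `t < 1` is close enough to `1`.
-/

open ComplexConjugate Metric

noncomputable def blaschkeFactor (a z : ℂ) : ℂ := (a - z) / (1 - conj a * z)

def blaschkeCoeff (a : ℂ) : ℕ → ℂ
  | 0 => a
  | k + 1 => (a * conj a - 1) * conj a ^ k

lemma one_sub_ne_zero_of_norm_lt_one {w : ℂ} (hw : ‖w‖ < 1) : 1 - w ≠ 0 :=
  sub_ne_zero.mpr fun h => by simp [← h] at hw

lemma norm_conj_mul_lt_one {a z : ℂ} (ha : ‖a‖ ≤ 1) (hz : ‖z‖ < 1) : ‖conj a * z‖ < 1 := by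
  rw [norm_mul, Complex.norm_conj]
  nlinarith [norm_nonneg a, norm_nonneg z]

lemma normSq_one_sub_conj_mul_sub_normSq_sub (a z : ℂ) :
    Complex.normSq (1 - conj a * z) - Complex.normSq (a - z) =
      (1 - Complex.normSq a) * (1 - Complex.normSq z) := by
  simp only [Complex.normSq_apply, Complex.sub_re, Complex.sub_im, Complex.mul_re,
    Complex.mul_im, Complex.conj_re, Complex.conj_im, Complex.one_re, Complex.one_im]
  ring

lemma norm_blaschkeFactor_lt_one {a z : ℂ} (ha : ‖a‖ < 1) (hz : ‖z‖ < 1) :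
    ‖blaschkeFactor a z‖ < 1 := by
  have hden := one_sub_ne_zero_of_norm_lt_one (norm_conj_mul_lt_one ha.le hz)
  rw [blaschkeFactor, norm_div, div_lt_one (norm_pos_iff.mpr hden)]
  have key := normSq_one_sub_conj_mul_sub_normSq_sub a z
  simp only [Complex.normSq_eq_norm_sq] at key
  have hpos : 0 < (1 - ‖a‖ ^ 2) * (1 - ‖z‖ ^ 2) := by
    apply mul_pos <;> nlinarith [norm_nonneg a, norm_nonneg z]
  exact lt_of_pow_lt_pow_left₀ 2 (norm_nonneg _) (by linarith)

lemma analyticOn_blaschkeFactor {a : ℂ} (ha : ‖a‖ ≤ 1) :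
    AnalyticOn ℂ (blaschkeFactor a) (ball 0 1) :=
  (analyticOn_const.sub analyticOn_id).div
    (analyticOn_const.sub (analyticOn_const.mul analyticOn_id)) fun _ hz =>
      one_sub_ne_zero_of_norm_lt_one (norm_conj_mul_lt_one ha (mem_ball_zero_iff.mp hz))

lemma hasSum_blaschkeCoeff_mul_pow {a z : ℂ} (h : ‖conj a * z‖ < 1) :
    HasSum (fun k => blaschkeCoeff a k * z ^ k) (blaschkeFactor a z) := by
  have hsucc : HasSum (fun k => blaschkeCoeff a (k + 1) * z ^ (k + 1))
      ((a * conj a - 1) * z * (1 - conj a * z)⁻¹) := by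
    have e : (fun k => blaschkeCoeff a (k + 1) * z ^ (k + 1)) =
        fun k => (a * conj a - 1) * z * (conj a * z) ^ k := by
      funext k; rw [blaschkeCoeff]; ring
    rw [e]
    exact (hasSum_geometric_of_norm_lt_one h).mul_left _
  convert HasSum.zero_add (f := fun k => blaschkeCoeff a k * z ^ k) hsucc using 1
  rw [blaschkeFactor, pow_zero, mul_one, blaschkeCoeff, ← div_eq_mul_inv,
    add_div' _ _ _ (one_sub_ne_zero_of_norm_lt_one h)]
  ring

lemma norm_blaschkeCoeff_succ {a : ℂ} (ha : ‖a‖ ≤ 1) (k : ℕ) :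
    ‖blaschkeCoeff a (k + 1)‖ = (1 - ‖a‖ ^ 2) * ‖a‖ ^ k := by
  rw [blaschkeCoeff, norm_mul, norm_pow, Complex.norm_conj, Complex.mul_conj,
    Complex.normSq_eq_norm_sq, ← Complex.ofReal_one, ← Complex.ofReal_sub, Complex.norm_real,
    Real.norm_eq_abs, abs_of_nonpos (by nlinarith [norm_nonneg a]), neg_sub]

lemma hasSum_norm_blaschkeCoeff_mul_pow {a : ℂ} {r : ℝ} (ha : ‖a‖ ≤ 1) (hr : 0 ≤ r)
    (har : ‖a‖ * r < 1) :
    HasSum (fun k => ‖blaschkeCoeff a k‖ * r ^ k) (‖a‖ + (1 - ‖a‖ ^ 2) * r / (1 - ‖a‖ * r)) := by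
  have hsucc : HasSum (fun k => ‖blaschkeCoeff a (k + 1)‖ * r ^ (k + 1))
      ((1 - ‖a‖ ^ 2) * r * (1 - ‖a‖ * r)⁻¹) := by
    have e : (fun k => ‖blaschkeCoeff a (k + 1)‖ * r ^ (k + 1)) =
        fun k => (1 - ‖a‖ ^ 2) * r * (‖a‖ * r) ^ k := by
      funext k; rw [norm_blaschkeCoeff_succ ha]; ring
    rw [e]
    exact (hasSum_geometric_of_lt_one (by positivity) har).mul_left _
  convert HasSum.zero_add (f := fun k => ‖blaschkeCoeff a k‖ * r ^ k) hsucc using 1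
  rw [pow_zero, mul_one, blaschkeCoeff, div_eq_mul_inv]

lemma one_lt_add_mul_div {t r : ℝ} (ht : t < 1) (htr : t * r < 1) (h : 1 < r * (1 + 2 * t)) :
    1 < t + (1 - t ^ 2) * r / (1 - t * r) := by
  have hpos : 0 < 1 - t * r := by linarith
  rw [← sub_pos, show t + (1 - t ^ 2) * r / (1 - t * r) - 1
    = (1 - t) * (r * (1 + 2 * t) - 1) / (1 - t * r) by field_simp; ring]
  exact div_pos (mul_pos (by linarith) (by linarith)) hpos

lemma exists_lt_one_one_lt_mul_one_add_two_mul {r : ℝ} (hr : 1 / 3 < r) :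
    ∃ t : ℝ, 0 ≤ t ∧ t < 1 ∧ t * r < 1 ∧ 1 < r * (1 + 2 * t) := by
  have hden : 0 < 2 + 3 * r := by linarith
  refine ⟨3 / (2 + 3 * r), by positivity, (div_lt_one hden).mpr (by linarith), ?_, ?_⟩
  · rw [div_mul_eq_mul_div, div_lt_one hden]; linarith
  · rw [← sub_pos, show r * (1 + 2 * (3 / (2 + 3 * r))) - 1
      = (3 * r - 1) * (r + 2) / (2 + 3 * r) by field_simp; ring]
    exact div_pos (mul_pos (by linarith) (by linarith)) hden

/-- Sharpness of the Bohr radius `1/3`. -/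
theorem bohr_radius_sharp (r : ℝ) (hr : 1 / 3 < r) :
    ∃ (f : ℂ → ℂ) (a : ℕ → ℂ),
      AnalyticOn ℂ f (Metric.ball (0 : ℂ) 1) ∧
      (∀ z ∈ Metric.ball (0 : ℂ) 1, HasSum (fun k : ℕ => a k * z ^ k) (f z)) ∧
      (∀ z ∈ Metric.ball (0 : ℂ) 1, ‖f z‖ < 1) ∧
      1 < ∑' k : ℕ, ‖a k‖ * r ^ k := by
  obtain ⟨t, ht0, ht1, htr, hgrowth⟩ := exists_lt_one_one_lt_mul_one_add_two_mul hr
  have hnorm : ‖(t : ℂ)‖ = t := by rw [Complex.norm_real, Real.norm_of_nonneg ht0]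
  have ha : ‖(t : ℂ)‖ < 1 := by rwa [hnorm]
  refine ⟨blaschkeFactor t, blaschkeCoeff t, analyticOn_blaschkeFactor ha.le,
    fun z hz => hasSum_blaschkeCoeff_mul_pow (norm_conj_mul_lt_one ha.le (mem_ball_zero_iff.mp hz)),
    fun z hz => norm_blaschkeFactor_lt_one ha (mem_ball_zero_iff.mp hz), ?_⟩
  rw [(hasSum_norm_blaschkeCoeff_mul_pow ha.le (by linarith) (by rwa [hnorm])).tsum_eq, hnorm]
  exact one_lt_add_mul_div ht1 htr hgrowth
end

section
/- Let g(z) = Σ_{k=0}^∞ b_k z^k be analytic on the unit disk with |g(z)| ≤ 1, |b_0| < 1, and let 0 < r ≤ 1, p ≥ 1 an integer. Then Σ_{k=1}^∞ |b_k|^2 r^{pk} ≤ r^p (1 - |b_0|^2)^2 / (1 - |b_0|^2 r^p). -/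
open MeasureTheory Metric Set Filter AddCircle ComplexConjugate ContinuousMap
open scoped Topology

/-!
Write `a = b 0`. The Schwarz–Pick lemma gives `‖g z - a‖ ≤ ‖z‖ * ‖1 - conj a * g z‖` on the disc.
On the circle `z = ρ u`, `‖u‖ = 1`, `ρ < 1`, both sides are absolutely convergent power series
in `u`, so Parseval turns the pointwise inequality into one between the `ℓ²` norms of their
coefficients. With `S = ∑_{k ≥ 1} ‖b k‖² ρ^{2k}` this reads
`S ≤ ρ² (1 - ‖a‖²)² + ρ² ‖a‖² S`, which is the claim for `t = ρ² < 1`. The case `t = r ^ p ≤ 1`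
follows by letting `t` increase to `r ^ p`, termwise (Fatou's lemma for series).
-/

lemma summable_sq_norm_of_summable_norm {ι E : Type*} [SeminormedAddCommGroup E] {c : ι → E}
    (hc : Summable fun i => ‖c i‖) : Summable fun i => ‖c i‖ ^ 2 := by
  refine hc.of_norm_bounded_eventually ?_
  filter_upwards [hc.tendsto_cofinite_zero.eventually (ge_mem_nhds zero_lt_one)] with i hi
  rw [Real.norm_of_nonneg (by positivity), sq]
  exact mul_le_of_le_one_left (norm_nonneg _) hi

section Parseval

variable {T : ℝ} [Fact (0 < T)]

theorem hasSum_sq_norm_integral_tsum_mul_fourier {c : ℤ → ℂ} (hc : Summable fun n => ‖c n‖) :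
    HasSum (fun n => ‖c n‖ ^ 2)
      (∫ x, ‖∑' n, c n * fourier n x‖ ^ 2 ∂(haarAddCircle (T := T))) := by
  have hF : Summable fun n => c n • fourier (T := T) n :=
    .of_norm (by simpa [norm_smul, fourier_norm] using hc)
  set F := ∑' n, c n • fourier (T := T) n
  have hc2 : Memℓp c 2 :=
    (memℓp_gen_iff (by norm_num)).2 (by simpa using summable_sq_norm_of_summable_norm hc)
  have hrepr : fourierBasis.repr (toLp 2 haarAddCircle ℂ F) = ⟨c, hc2⟩ := by
    rw [← LinearIsometryEquiv.eq_symm_apply]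
    refine ((toLp 2 haarAddCircle ℂ).hasSum hF.hasSum).unique ?_
    simpa [fourierLp] using (fourierBasis (T := T)).hasSum_repr_symm ⟨c, hc2⟩
  have hcoeff (n : ℤ) : fourierCoeff (toLp 2 haarAddCircle ℂ F) n = c n := by
    rw [← fourierBasis_repr, hrepr]
  have hFx (x : AddCircle T) : F x = ∑' n, c n * fourier n x := by
    simpa using (ContinuousMap.evalCLM ℂ x).map_tsum hF
  convert hasSum_sq_fourierCoeff (toLp 2 haarAddCircle ℂ F) using 1
  · funext n; rw [hcoeff]
  · refine integral_congr_ae ?_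
    filter_upwards [coeFn_toLp (p := 2) (𝕜 := ℂ) haarAddCircle F] with x hx
    rw [hx, hFx]

theorem hasSum_sq_norm_integral_tsum_mul_toCircle_pow {c : ℕ → ℂ}
    (hc : Summable fun k => ‖c k‖) :
    HasSum (fun k => ‖c k‖ ^ 2)
      (∫ x, ‖∑' k, c k * (toCircle x : ℂ) ^ k‖ ^ 2 ∂(haarAddCircle (T := T))) := by
  set c' := Function.extend ((↑) : ℕ → ℤ) c 0
  have hext {F : ℂ → ℝ} (hF : F 0 = 0) (n : ℤ) :
      F (c' n) = Function.extend ((↑) : ℕ → ℤ) (fun k => F (c k)) 0 n := by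
    by_cases hn : ∃ k : ℕ, (k : ℤ) = n
    · obtain ⟨k, rfl⟩ := hn
      simp [c', Nat.cast_injective.extend_apply]
    · simp [c', Function.extend_apply' _ _ _ hn, hF]
  have hc' : Summable fun n => ‖c' n‖ := by
    simpa only [hext norm_zero, summable_extend_zero Nat.cast_injective] using hc
  have h := hasSum_sq_norm_integral_tsum_mul_fourier (T := T) hc'
  simp only [hext (F := fun z => ‖z‖ ^ 2) (by simp), hasSum_extend_zero Nat.cast_injective] at h
  convert h using 4 with x
  congr 1
  refine (tsum_congr fun k => ?_).trans (Nat.cast_injective.tsum_eq fun n hn => ?_)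
  · simp [c', Nat.cast_injective.extend_apply, fourier_apply, toCircle_nsmul]
  · by_contra hn'
    exact hn (by simp [c', Function.extend_apply' _ _ _ hn'])

end Parseval

theorem tsum_sq_norm_le_of_norm_tsum_mul_pow_le {c d : ℕ → ℂ} (hc : Summable fun k => ‖c k‖)
    (hd : Summable fun k => ‖d k‖)
    (h : ∀ u : ℂ, ‖u‖ = 1 → ‖∑' k, c k * u ^ k‖ ≤ ‖∑' k, d k * u ^ k‖) :
    ∑' k, ‖c k‖ ^ 2 ≤ ∑' k, ‖d k‖ ^ 2 := by
  have : Fact ((0 : ℝ) < 1) := ⟨one_pos⟩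
  have hint {e : ℕ → ℂ} (he : Summable fun k => ‖e k‖) :
      Integrable (fun x : AddCircle (1 : ℝ) => ‖∑' k, e k * (toCircle x : ℂ) ^ k‖ ^ 2)
        haarAddCircle :=
    have hcont : Continuous fun x : AddCircle (1 : ℝ) => ∑' k, e k * (toCircle x : ℂ) ^ k :=
      continuous_tsum (fun k => continuous_const.mul
        ((continuous_subtype_val.comp continuous_toCircle).pow k)) he
        (fun k x => by simp [Circle.norm_coe])
    (hcont.norm.pow 2).integrable_of_hasCompactSupport (.of_compactSpace _)
  rw [(hasSum_sq_norm_integral_tsum_mul_toCircle_pow (T := 1) hc).tsum_eq,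
    (hasSum_sq_norm_integral_tsum_mul_toCircle_pow (T := 1) hd).tsum_eq]
  exact integral_mono (hint hc) (hint hd) fun x => by
    gcongr
    exact h _ (Circle.norm_coe _)

lemma norm_sub_le_norm_one_sub_conj_mul {a w : ℂ} (ha : ‖a‖ ≤ 1) (hw : ‖w‖ ≤ 1) :
    ‖w - a‖ ≤ ‖1 - conj a * w‖ := by
  have key : ‖1 - conj a * w‖ ^ 2 - ‖w - a‖ ^ 2 = (1 - ‖a‖ ^ 2) * (1 - ‖w‖ ^ 2) := by
    simp only [Complex.sq_norm, Complex.normSq_apply, Complex.sub_re, Complex.sub_im,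
      Complex.mul_re, Complex.mul_im, Complex.one_re, Complex.one_im, Complex.conj_re,
      Complex.conj_im]
    ring
  have h : 0 ≤ (1 - ‖a‖ ^ 2) * (1 - ‖w‖ ^ 2) :=
    mul_nonneg (by nlinarith [norm_nonneg a]) (by nlinarith [norm_nonneg w])
  exact (pow_le_pow_iff_left₀ (norm_nonneg _) (norm_nonneg _) two_ne_zero).1 (by linarith)

theorem norm_sub_le_norm_mul_norm_one_sub_conj_mul {f : ℂ → ℂ}
    (hf : DifferentiableOn ℂ f (ball 0 1)) (hf1 : ∀ z ∈ ball (0 : ℂ) 1, ‖f z‖ ≤ 1)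
    (hf0 : ‖f 0‖ < 1) {z : ℂ} (hz : ‖z‖ < 1) :
    ‖f z - f 0‖ ≤ ‖z‖ * ‖1 - conj (f 0) * f z‖ := by
  set a := f 0
  have hden (w : ℂ) (hw : w ∈ ball (0 : ℂ) 1) : 1 - conj a * f w ≠ 0 := by
    refine sub_ne_zero.2 fun h => ?_
    have : ‖conj a * f w‖ < 1 := by
      rw [norm_mul, Complex.norm_conj]
      exact (mul_le_of_le_one_right (norm_nonneg _) (hf1 w hw)).trans_lt hf0
    simp [← h] at this
  set φ := fun w => (f w - a) / (1 - conj a * f w)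
  have hφ : ‖φ z‖ ≤ ‖z‖ := by
    refine Complex.norm_le_norm_of_mapsTo_ball ?_ (fun w hw => ?_) (by simp [φ, a]) hz
    · exact (hf.sub_const a).div ((differentiableOn_const 1).sub (hf.const_mul _)) hden
    · rw [mem_closedBall_zero_iff, norm_div, div_le_one (norm_pos_iff.2 (hden w hw))]
      exact norm_sub_le_norm_one_sub_conj_mul hf0.le (hf1 w hw)
  calc ‖f z - a‖ = ‖φ z‖ * ‖1 - conj a * f z‖ := by
        rw [← norm_mul, div_mul_cancel₀ _ (hden z (mem_ball_zero_iff.2 hz))]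
    _ ≤ ‖z‖ * ‖1 - conj a * f z‖ := by gcongr

theorem tsum_sq_norm_succ_le_of_norm_tsum_sub_le {β : ℕ → ℂ} (hβ : Summable fun k => ‖β k‖)
    {ρ : ℝ} (hρ : 0 ≤ ρ) (h : ∀ u : ℂ, ‖u‖ = 1 →
      ‖∑' k, β k * u ^ k - β 0‖ ≤ ρ * ‖1 - conj (β 0) * ∑' k, β k * u ^ k‖) :
    ∑' k, ‖β (k + 1)‖ ^ 2 ≤
      ρ ^ 2 * (1 - ‖β 0‖ ^ 2) ^ 2 + ρ ^ 2 * ‖β 0‖ ^ 2 * ∑' k, ‖β (k + 1)‖ ^ 2 := by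
  set a := β 0
  -- the coefficients of `F u - β 0` and of `ρ * (1 - conj (β 0) * F u)`, `F u = ∑' k, β k * u ^ k`
  set c : ℕ → ℂ := fun k => β k - Pi.single (M := fun _ => ℂ) 0 a k
  set d : ℕ → ℂ := fun k => ρ * (Pi.single (M := fun _ => ℂ) 0 1 k - conj a * β k)
  have hc : Summable fun k => ‖c k‖ :=
    summable_norm_iff.2 (hβ.of_norm.sub (hasSum_pi_single 0 a).summable)
  have hd : Summable fun k => ‖d k‖ :=
    summable_norm_iff.2 (((hasSum_pi_single 0 1).summable.sub (hβ.of_norm.mul_left _)).mul_left _)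
  have hsingle (x u : ℂ) : HasSum (fun k => Pi.single (M := fun _ => ℂ) 0 x k * u ^ k) x := by
    convert hasSum_single (f := fun k => Pi.single (M := fun _ => ℂ) 0 x k * u ^ k) 0
      (fun k hk => by simp [hk]) using 1
    simp
  have hcd (u : ℂ) (hu : ‖u‖ = 1) : ‖∑' k, c k * u ^ k‖ ≤ ‖∑' k, d k * u ^ k‖ := by
    have hβu : HasSum (fun k => β k * u ^ k) (∑' k, β k * u ^ k) :=
      (Summable.of_norm (by simpa [hu] using hβ)).hasSum
    have hcu : HasSum (fun k => c k * u ^ k) (∑' k, β k * u ^ k - a) := by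
      simpa [c, sub_mul] using hβu.sub (hsingle a u)
    have hdu : HasSum (fun k => d k * u ^ k) (ρ * (1 - conj a * ∑' k, β k * u ^ k)) := by
      simpa [d, mul_sub, sub_mul, mul_assoc] using
        ((hsingle 1 u).sub (hβu.mul_left (conj a))).mul_left (ρ : ℂ)
    rw [hcu.tsum_eq, hdu.tsum_eq, norm_mul, Complex.norm_real, Real.norm_of_nonneg hρ]
    exact h u hu
  have hc0 : ‖c 0‖ ^ 2 = 0 := by simp [c, a]
  have hd0 : ‖d 0‖ ^ 2 = ρ ^ 2 * (1 - ‖a‖ ^ 2) ^ 2 := by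
    have : d 0 = ((ρ * (1 - ‖a‖ ^ 2) : ℝ) : ℂ) := by simp [d, a, Complex.conj_mul']
    rw [this, Complex.norm_real, Real.norm_eq_abs, sq_abs, mul_pow]
  have hc_succ (k : ℕ) : ‖c (k + 1)‖ ^ 2 = ‖β (k + 1)‖ ^ 2 := by simp [c]
  have hd_succ (k : ℕ) : ‖d (k + 1)‖ ^ 2 = ρ ^ 2 * ‖a‖ ^ 2 * ‖β (k + 1)‖ ^ 2 := by
    simp [d, mul_pow, mul_assoc]
  have key := tsum_sq_norm_le_of_norm_tsum_mul_pow_le hc hd hcd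
  rw [(summable_sq_norm_of_summable_norm hc).tsum_eq_zero_add,
    (summable_sq_norm_of_summable_norm hd).tsum_eq_zero_add, hc0, hd0, zero_add] at key
  simpa only [hc_succ, hd_succ, tsum_mul_left] using key

lemma tsum_le_of_tendsto_of_eventually_tsum_le {ι : Type*} {l : Filter ι} [l.NeBot]
    {f : ℕ → ι → ℝ} {F : ℕ → ℝ} {C : ℝ} (hf : ∀ k, Tendsto (f k) l (𝓝 (F k)))
    (h : ∀ᶠ s in l, (∀ k, 0 ≤ f k s) ∧ Summable (f · s) ∧ ∑' k, f k s ≤ C) :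
    ∑' k, F k ≤ C := by
  have hF (k : ℕ) : 0 ≤ F k := ge_of_tendsto (hf k) (h.mono fun s hs => hs.1 k)
  refine Real.tsum_le_of_sum_range_le hF fun N => ?_
  refine le_of_tendsto (tendsto_finsetSum _ fun k _ => hf k) (h.mono fun s hs => ?_)
  obtain ⟨hs0, hsum, hle⟩ := hs
  exact (hsum.sum_le_tsum _ fun k _ => hs0 k).trans hle

lemma summable_norm_mul_pow_of_hasSum {g : ℂ → ℂ} {b : ℕ → ℂ}
    (hrep : ∀ z ∈ ball (0 : ℂ) 1, HasSum (fun k => b k * z ^ k) (g z)) {z : ℂ} (hz : ‖z‖ < 1) :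
    Summable fun k => ‖b k * z ^ k‖ := by
  obtain ⟨w, hzw, hw1⟩ := exists_between hz
  have hw : ‖(w : ℂ)‖ = w := by simp [abs_of_pos ((norm_nonneg z).trans_lt hzw)]
  refine summable_norm_iff.2 (summable_powerSeries_of_norm_lt ?_ (hw ▸ hzw))
  exact (hrep w (by rwa [mem_ball_zero_iff, hw])).tendsto_sum_nat.cauchySeq

theorem tsum_sq_norm_coeff_succ_mul_pow_le {g : ℂ → ℂ} {b : ℕ → ℂ}
    (hg : DifferentiableOn ℂ g (ball 0 1))
    (hrep : ∀ z ∈ ball (0 : ℂ) 1, HasSum (fun k => b k * z ^ k) (g z))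
    (hbd : ∀ z ∈ ball (0 : ℂ) 1, ‖g z‖ ≤ 1) (hb0 : ‖b 0‖ < 1) {t : ℝ} (ht0 : 0 < t)
    (ht1 : t < 1) :
    Summable (fun k => ‖b (k + 1)‖ ^ 2 * t ^ (k + 1)) ∧
      ∑' k, ‖b (k + 1)‖ ^ 2 * t ^ (k + 1) ≤ t * (1 - ‖b 0‖ ^ 2) ^ 2 / (1 - ‖b 0‖ ^ 2 * t) := by
  set ρ := √t
  have hρ0 : 0 ≤ ρ := Real.sqrt_nonneg t
  have hρ1 : ρ < 1 := (Real.sqrt_lt' one_pos).2 (by simpa using ht1)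
  have hρt : ρ ^ 2 = t := Real.sq_sqrt ht0.le
  set β : ℕ → ℂ := fun k => b k * (ρ : ℂ) ^ k
  have hβ : Summable fun k => ‖β k‖ :=
    summable_norm_mul_pow_of_hasSum hrep (by simpa [abs_of_nonneg hρ0] using hρ1)
  have hβ_succ (k : ℕ) : ‖β (k + 1)‖ ^ 2 = ‖b (k + 1)‖ ^ 2 * t ^ (k + 1) := by
    simp [β, mul_pow, abs_of_nonneg hρ0, ← pow_mul, ← hρt, mul_comm]
  have hg0 : g 0 = b 0 := (hrep 0 (mem_ball_self one_pos)).unique <| by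
    simpa using hasSum_single (f := fun k => b k * (0 : ℂ) ^ k) 0 fun k hk => by simp [hk]
  have hz (u : ℂ) (hu : ‖u‖ = 1) : ‖(ρ : ℂ) * u‖ < 1 := by
    simpa [hu, abs_of_nonneg hρ0] using hρ1
  have hcircle (u : ℂ) (hu : ‖u‖ = 1) : ∑' k, β k * u ^ k = g (ρ * u) := by
    rw [← (hrep _ (mem_ball_zero_iff.2 (hz u hu))).tsum_eq]
    exact tsum_congr fun k => by simp [β, mul_pow, mul_assoc]
  have key := tsum_sq_norm_succ_le_of_norm_tsum_sub_le hβ hρ0 fun u hu => by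
    have := norm_sub_le_norm_mul_norm_one_sub_conj_mul hg hbd (hg0 ▸ hb0) (hz u hu)
    simpa [hcircle u hu, hg0, hu, abs_of_nonneg hρ0, β] using this
  simp only [hβ_succ, hρt, show β 0 = b 0 by simp [β]] at key
  have hden : 0 < 1 - ‖b 0‖ ^ 2 * t := by nlinarith [norm_nonneg (b 0)]
  refine ⟨?_, (le_div_iff₀ hden).2 (by linarith)⟩
  exact ((summable_nat_add_iff 1).2 (summable_sq_norm_of_summable_norm hβ)).congr hβ_succ

theorem coeff_square_tail_estimate_general (g : ℂ → ℂ) (b : ℕ → ℂ)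
    (hg : AnalyticOn ℂ g (Metric.ball (0 : ℂ) 1))
    (hrep : ∀ z ∈ Metric.ball (0 : ℂ) 1, HasSum (fun k : ℕ => b k * z ^ k) (g z))
    (hbd : ∀ z ∈ Metric.ball (0 : ℂ) 1, ‖g z‖ ≤ 1)
    (hb0 : ‖b 0‖ < 1) (r : ℝ) (hr0 : 0 < r) (hr1 : r ≤ 1) (p : ℕ) :
    ∑' k : ℕ, ‖b (k + 1)‖ ^ 2 * r ^ (p * (k + 1)) ≤
      r ^ p * (1 - ‖b 0‖ ^ 2) ^ 2 / (1 - ‖b 0‖ ^ 2 * r ^ p) := by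
  simp_rw [pow_mul]
  have ht0 : 0 < r ^ p := pow_pos hr0 p
  have ht1 : r ^ p ≤ 1 := pow_le_one₀ hr0.le hr1
  have hden : 0 < 1 - ‖b 0‖ ^ 2 * r ^ p := by nlinarith [norm_nonneg (b 0)]
  refine tsum_le_of_tendsto_of_eventually_tsum_le (l := 𝓝[<] (r ^ p))
    (fun k => (((continuous_pow (k + 1)).const_mul _).tendsto _).mono_left nhdsWithin_le_nhds) ?_
  filter_upwards [Ioo_mem_nhdsLT ht0] with s ⟨hs0, hst⟩
  obtain ⟨hsum, hle⟩ :=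
    tsum_sq_norm_coeff_succ_mul_pow_le hg.differentiableOn hrep hbd hb0 hs0 (hst.trans_le ht1)
  refine ⟨fun k => by positivity, hsum, hle.trans ?_⟩
  gcongr

/-- Coefficient estimate (Lemma A): `Σ_{k≥1} |b_k|² r^{pk} ≤ r^p (1-|b₀|²)²/(1-|b₀|² r^p)`. -/
theorem coeff_square_tail_estimate (g : ℂ → ℂ) (b : ℕ → ℂ)
    (hg : AnalyticOn ℂ g (Metric.ball (0 : ℂ) 1))
    (hrep : ∀ z ∈ Metric.ball (0 : ℂ) 1, HasSum (fun k : ℕ => b k * z ^ k) (g z))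
    (hbd : ∀ z ∈ Metric.ball (0 : ℂ) 1, ‖g z‖ ≤ 1)
    (hb0 : ‖b 0‖ < 1) (r : ℝ) (hr0 : 0 < r) (hr1 : r ≤ 1) (p : ℕ) (hp : 1 ≤ p) :
    ∑' k : ℕ, ‖b (k + 1)‖ ^ 2 * r ^ (p * (k + 1)) ≤
      r ^ p * (1 - ‖b 0‖ ^ 2) ^ 2 / (1 - ‖b 0‖ ^ 2 * r ^ p) :=
  coeff_square_tail_estimate_general g b hg hrep hbd hb0 r hr0 hr1 p
end

section
/- Let p ∈ ℕ, 0 ≤ m ≤ p, and f(z) = Σ_{k=0}^∞ a_{pk+m} z^{pk+m} be analytic on the unit disk with |f(z)| < 1. If |a_m| < r then Σ_{k=1}^∞ |a_{pk+m}| r^{pk} ≤ r^p √(1 - |a_m|^2)/√(1 - r^{2p}). -/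
/-!
On a circle `|z| = ρ < 1` the series converges absolutely, hence uniformly, so `θ ↦ f (ρ e^{iθ})`
is a continuous function whose Fourier coefficients are the `a_n ρ^n`. Bessel's inequality bounds
`∑ |a_n|² ρ^{2n}` by `sup |f|² ≤ 1`, and letting `ρ → 1` gives `∑_k |a_{pk+m}|² ≤ 1`.
Cauchy–Schwarz against the geometric weights `r^{pk}` then yields the tail estimate.
-/

open Filter Finset AddCircle

namespace AddCircle

variable {T : ℝ} [Fact (0 < T)]

theorem sum_sq_norm_fourierCoeff_le (G : C(AddCircle T, ℂ)) (s : Finset ℤ) :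
    ∑ i ∈ s, ‖fourierCoeff G i‖ ^ 2 ≤ ‖G‖ ^ 2 := by
  have hL2 : ‖ContinuousMap.toLp (E := ℂ) 2 haarAddCircle ℂ G‖ ≤ ‖G‖ := by
    refine (ContinuousLinearMap.le_opNorm _ _).trans ?_
    refine (mul_le_of_le_one_left (norm_nonneg _) ?_)
    refine (ContinuousMap.toLp_norm_le _).trans ?_
    simp [MeasureTheory.measureUnivNNReal]
  simp_rw [← fourierCoeff_toLp, ← fourierBasis_repr, fourierBasis.repr_apply_apply]
  exact (fourierBasis.orthonormal.sum_inner_products_le _).trans (by gcongr)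

theorem fourierCoeff_tsum_smul_fourier {ι : Type*} {b : ι → ℂ} {e : ι → ℤ}
    (he : Function.Injective e) (hb : Summable (‖b ·‖)) (j : ι) :
    fourierCoeff (⇑(∑' i, b i • fourier (e i) : C(AddCircle T, ℂ))) (e j) = b j := by
  -- `fourierCoeff · (e j)` as a continuous linear functional, so that it commutes with `∑'`
  let L : C(AddCircle T, ℂ) →L[ℂ] ℂ := lp.evalCLM ℂ (fun _ : ℤ ↦ ℂ) 2 (e j) ∘L
    fourierBasis.repr.toContinuousLinearEquiv.toContinuousLinearMap ∘L
    ContinuousMap.toLp (E := ℂ) 2 haarAddCircle ℂ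
  have hL : ∀ G, L G = fourierCoeff G (e j) := fun G ↦
    (fourierBasis_repr _ _).trans (fourierCoeff_toLp G _)
  have hsum : Summable fun i ↦ b i • (fourier (e i) : C(AddCircle T, ℂ)) :=
    .of_norm (by simpa [norm_smul, fourier_norm] using hb)
  rw [← hL, L.map_tsum hsum]
  refine (hasSum_single j fun i hij ↦ ?_).tsum_eq.trans ?_
  · simp [hL, fourierCoeff.const_smul, fourierCoeff_fourier, he.ne hij.symm]
  · simp [hL, fourierCoeff.const_smul, fourierCoeff_fourier]

end AddCircle

section PowerSeries

variable {ι : Type*} {c : ι → ℂ} {e : ι → ℕ}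

theorem summable_norm_mul_pow_of_summable_s6 (he : Function.Injective e) {σ : ℂ}
    (hσ : Summable fun i ↦ c i * σ ^ e i) {ρ : ℝ} (hρ0 : 0 ≤ ρ) (hρσ : ρ < ‖σ‖) :
    Summable fun i ↦ ‖c i‖ * ρ ^ e i := by
  have hσ0 : 0 < ‖σ‖ := hρ0.trans_lt hρσ
  obtain ⟨C, hC⟩ := hσ.norm.tendsto_cofinite_zero.bddAbove_range_of_cofinite
  have hgeom : Summable fun i ↦ C * (ρ / ‖σ‖) ^ e i :=
    ((summable_geometric_of_lt_one (by positivity) ((div_lt_one hσ0).2 hρσ)).comp_injective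
      he).mul_left C
  refine hgeom.of_nonneg_of_le (fun i ↦ by positivity) fun i ↦ ?_
  calc ‖c i‖ * ρ ^ e i = ‖c i * σ ^ e i‖ * (ρ / ‖σ‖) ^ e i := by
        rw [norm_mul, norm_pow, div_pow]; field_simp
    _ ≤ C * (ρ / ‖σ‖) ^ e i := by gcongr; exact hC ⟨i, rfl⟩

variable {f : ℂ → ℂ} {M : ℝ}

theorem sum_sq_norm_coeff_mul_pow_le (he : Function.Injective e)
    (hrep : ∀ z ∈ Metric.ball (0 : ℂ) 1, HasSum (fun i ↦ c i * z ^ e i) (f z))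
    (hbd : ∀ z ∈ Metric.ball (0 : ℂ) 1, ‖f z‖ ≤ M) {ρ : ℝ} (hρ0 : 0 ≤ ρ) (hρ1 : ρ < 1)
    (s : Finset ι) :
    ∑ i ∈ s, (‖c i‖ * ρ ^ e i) ^ 2 ≤ M ^ 2 := by
  have he' : Function.Injective fun i ↦ (e i : ℤ) := Nat.cast_injective.comp he
  set b : ι → ℂ := fun i ↦ c i * (ρ : ℂ) ^ e i
  have hnorm_b : ∀ i, ‖b i‖ = ‖c i‖ * ρ ^ e i := fun i ↦ by
    simp [b, abs_of_nonneg hρ0]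
  have hb : Summable (‖b ·‖) := by
    have hσ : ‖(((ρ + 1) / 2 : ℝ) : ℂ)‖ = (ρ + 1) / 2 := by
      rw [Complex.norm_real, Real.norm_of_nonneg (by linarith)]
    simp_rw [hnorm_b]
    refine summable_norm_mul_pow_of_summable_s6 he (hrep _ ?_).summable hρ0 (by linarith)
    rw [Metric.mem_ball, dist_zero_right, hσ]
    linarith
  set G : C(AddCircle (1 : ℝ), ℂ) := ∑' i, b i • fourier (e i : ℤ)
  have hmem : ∀ x : AddCircle (1 : ℝ), (ρ : ℂ) * toCircle x ∈ Metric.ball (0 : ℂ) 1 := fun x ↦ by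
    rwa [Metric.mem_ball, dist_zero_right, norm_mul, Circle.norm_coe, mul_one, Complex.norm_real,
      Real.norm_of_nonneg hρ0]
  have hG : ∀ x, G x = f (ρ * toCircle x) := fun x ↦ by
    have hsum : Summable fun i ↦ b i • (fourier (e i : ℤ) : C(AddCircle (1 : ℝ), ℂ)) :=
      .of_norm (by simpa [norm_smul, fourier_norm] using hb)
    refine ((ContinuousMap.evalCLM ℂ x).map_tsum hsum).trans ?_
    refine ((hrep _ (hmem x)).tsum_eq.symm.trans (tsum_congr fun i ↦ ?_)).symm
    simp [b, fourier_apply, toCircle_nsmul, mul_pow, mul_assoc]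
  have hGM : ‖G‖ ≤ M := (ContinuousMap.norm_le_of_nonempty _).2 fun x ↦ hG x ▸ hbd _ (hmem x)
  calc ∑ i ∈ s, (‖c i‖ * ρ ^ e i) ^ 2
      = ∑ n ∈ s.image fun i ↦ (e i : ℤ), ‖fourierCoeff G n‖ ^ 2 := by
        rw [sum_image fun i _ j _ hij ↦ he' hij]
        simp_rw [G, fourierCoeff_tsum_smul_fourier he' hb, hnorm_b]
    _ ≤ ‖G‖ ^ 2 := sum_sq_norm_fourierCoeff_le G _
    _ ≤ M ^ 2 := by gcongr

theorem sum_sq_norm_coeff_le (he : Function.Injective e)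
    (hrep : ∀ z ∈ Metric.ball (0 : ℂ) 1, HasSum (fun i ↦ c i * z ^ e i) (f z))
    (hbd : ∀ z ∈ Metric.ball (0 : ℂ) 1, ‖f z‖ ≤ M) (s : Finset ι) :
    ∑ i ∈ s, ‖c i‖ ^ 2 ≤ M ^ 2 := by
  have hcont : Continuous fun ρ : ℝ ↦ ∑ i ∈ s, (‖c i‖ * ρ ^ e i) ^ 2 := by fun_prop
  have hlim := (hcont.tendsto 1).mono_left (nhdsWithin_le_nhds (s := Set.Iio 1))
  simpa using le_of_tendsto hlim <| eventually_of_mem (Ioo_mem_nhdsLT zero_lt_one) fun ρ hρ ↦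
    sum_sq_norm_coeff_mul_pow_le he hrep hbd hρ.1.le hρ.2 s

end PowerSeries

theorem tsum_mul_pow_succ_le_of_sum_sq_le {u : ℕ → ℝ} {A : ℝ}
    (hA : ∀ s : Finset ℕ, ∑ k ∈ s, u k ^ 2 ≤ A) {q : ℝ} (hq0 : 0 ≤ q) (hq1 : q < 1) :
    ∑' k, u k * q ^ (k + 1) ≤ q * √A / √(1 - q ^ 2) := by
  have hq2 : q ^ 2 < 1 := pow_lt_one₀ hq0 hq1 two_ne_zero
  have hgeom : ∀ s : Finset ℕ, ∑ k ∈ s, (q ^ (k + 1)) ^ 2 ≤ q ^ 2 / (1 - q ^ 2) := fun s ↦ by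
    have hsum := (summable_geometric_of_lt_one (by positivity) hq2).mul_left (q ^ 2)
    calc ∑ k ∈ s, (q ^ (k + 1)) ^ 2 = ∑ k ∈ s, q ^ 2 * (q ^ 2) ^ k := by
          simp_rw [← pow_mul, ← pow_add]; ring_nf
      _ ≤ ∑' k, q ^ 2 * (q ^ 2) ^ k := hsum.sum_le_tsum s fun k _ ↦ by positivity
      _ = q ^ 2 / (1 - q ^ 2) := by
          rw [tsum_mul_left, tsum_geometric_of_lt_one (by positivity) hq2, div_eq_mul_inv]
  refine tsum_le_of_sum_le' (by positivity) fun s ↦ ?_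
  calc ∑ k ∈ s, u k * q ^ (k + 1)
      ≤ √(∑ k ∈ s, u k ^ 2) * √(∑ k ∈ s, (q ^ (k + 1)) ^ 2) :=
        Real.sum_mul_le_sqrt_mul_sqrt _ _ _
    _ ≤ √A * √(q ^ 2 / (1 - q ^ 2)) := by gcongr <;> apply_assumption
    _ = q * √A / √(1 - q ^ 2) := by
        rw [Real.sqrt_div' _ (by linarith), Real.sqrt_sq hq0]; ring

theorem tail_estimate_lacunary_small_general (p m : ℕ) (hp : 1 ≤ p)
    (f : ℂ → ℂ) (a : ℕ → ℂ)
    (hrep : ∀ z ∈ Metric.ball (0 : ℂ) 1,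
      HasSum (fun k : ℕ => a (p * k + m) * z ^ (p * k + m)) (f z))
    (hbd : ∀ z ∈ Metric.ball (0 : ℂ) 1, ‖f z‖ < 1)
    (r : ℝ) (hr0 : 0 < r) (hr1 : r < 1) :
    ∑' k : ℕ, ‖a (p * (k + 1) + m)‖ * r ^ (p * (k + 1)) ≤
      r ^ p * Real.sqrt (1 - ‖a m‖ ^ 2) / Real.sqrt (1 - r ^ (2 * p)) := by
  have he : Function.Injective fun k ↦ p * k + m := fun i j hij ↦
    Nat.eq_of_mul_eq_mul_left hp (Nat.add_right_cancel hij)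
  have hbessel (s : Finset ℕ) : ∑ k ∈ s, ‖a (p * (k + 1) + m)‖ ^ 2 ≤ 1 - ‖a m‖ ^ 2 := by
    have := sum_sq_norm_coeff_le he hrep (fun z hz ↦ (hbd z hz).le)
      (insert 0 (s.map (addRightEmbedding 1)))
    rw [sum_insert (by simp), sum_map] at this
    simp only [mul_zero, zero_add, one_pow, addRightEmbedding_apply] at this
    linarith
  have hpow (k : ℕ) : r ^ (p * (k + 1)) = (r ^ p) ^ (k + 1) := pow_mul r p (k + 1)
  have hsq : r ^ (2 * p) = (r ^ p) ^ 2 := by rw [mul_comm, pow_mul]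
  simp_rw [hpow, hsq]
  exact tsum_mul_pow_succ_le_of_sum_sq_le hbessel (by positivity)
    (pow_lt_one₀ hr0.le hr1 (by omega))

/-- Lemma C, second case: tail estimate for series supported on exponents `pk+m`,
when `|a_m| < r`. -/
theorem tail_estimate_lacunary_small (p m : ℕ) (hp : 1 ≤ p) (hm : m ≤ p)
    (f : ℂ → ℂ) (a : ℕ → ℂ)
    (hf : AnalyticOn ℂ f (Metric.ball (0 : ℂ) 1))
    (hrep : ∀ z ∈ Metric.ball (0 : ℂ) 1,
      HasSum (fun k : ℕ => a (p * k + m) * z ^ (p * k + m)) (f z))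
    (hbd : ∀ z ∈ Metric.ball (0 : ℂ) 1, ‖f z‖ < 1)
    (r : ℝ) (hr0 : 0 < r) (hr1 : r < 1) (ham : ‖a m‖ < r) :
    ∑' k : ℕ, ‖a (p * (k + 1) + m)‖ * r ^ (p * (k + 1)) ≤
      r ^ p * Real.sqrt (1 - ‖a m‖ ^ 2) / Real.sqrt (1 - r ^ (2 * p)) :=
  tail_estimate_lacunary_small_general p m hp f a hrep hbd r hr0 hr1
end

section
/- If f(z) = Σ_{k=0}^∞ a_k z^k is analytic on the unit disk with |f(z)| ≤ 1 and 0 < r < 1 with |a_0| < r, then Σ_{k=1}^∞ |a_k| r^k ≤ r √(1 - |a_0|^2)/√(1 - r^2). -/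
/-!
The key is Bessel's inequality `∑ |a_k|² ≤ 1`. On the circle of radius `s < 1` the Taylor
polynomial `∑_{k<N} a_k z^k` differs from `f` by at most the tail `∑_{k≥N} |a_k| s^k`, so Parseval's identity
for polynomials gives `∑_{k<N} |a_k|² s^{2k} ≤ (1 + tail)²`; letting `N → ∞` and then `s → 1`
yields `∑ |a_k|² ≤ 1`. Hence `∑_{k≥1} |a_k|² ≤ 1 - |a_0|²`, and Cauchy–Schwarz against `(r^k)_{k≥1}`,
whose squares sum to at most `r²/(1 - r²)`, gives the bound.
-/

open Complex Filter Finset Polynomial Topology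

theorem summable_norm_mul_pow_of_summable_s8 {a : ℕ → ℂ} {s t : ℝ}
    (ht : Summable fun k => a k * (t : ℂ) ^ k) (hs0 : 0 ≤ s) (hst : s < t) :
    Summable fun k => ‖a k‖ * s ^ k := by
  have ht0 : 0 < t := hs0.trans_lt hst
  obtain ⟨C, hC⟩ : ∃ C, ∀ k, ‖a k‖ * t ^ k ≤ C := by
    obtain ⟨C, hC⟩ := ht.tendsto_atTop_zero.norm.bddAbove_range
    exact ⟨C, fun k => by simpa [norm_mul, abs_of_pos ht0] using hC ⟨k, rfl⟩⟩
  have hgeom : Summable fun k => C * (s / t) ^ k :=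
    (summable_geometric_of_lt_one (div_nonneg hs0 ht0.le) ((div_lt_one ht0).2 hst)).mul_left C
  refine hgeom.of_nonneg_of_le (fun k => by positivity) fun k => ?_
  calc ‖a k‖ * s ^ k = ‖a k‖ * t ^ k * (s / t) ^ k := by
        rw [div_pow, mul_assoc, mul_div_cancel₀ _ (by positivity)]
    _ ≤ C * (s / t) ^ k := by gcongr; exact hC k

theorem norm_sum_range_le_add_tsum {E : Type*} [NormedAddCommGroup E] {g : ℕ → E} {w : E}
    (hw : HasSum g w) (hsum : Summable fun k => ‖g k‖) (N : ℕ) :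
    ‖∑ k ∈ range N, g k‖ ≤ ‖w‖ + ∑' k, ‖g (k + N)‖ := by
  have htail : ‖w - ∑ k ∈ range N, g k‖ ≤ ∑' k, ‖g (k + N)‖ := by
    rw [← hw.tsum_eq, ← hw.summable.sum_add_tsum_nat_add N, add_sub_cancel_left]
    exact norm_tsum_le_tsum_norm ((summable_nat_add_iff N).2 hsum)
  calc ‖∑ k ∈ range N, g k‖ = ‖w - (w - ∑ k ∈ range N, g k)‖ := by rw [sub_sub_cancel]
    _ ≤ ‖w‖ + ‖w - ∑ k ∈ range N, g k‖ := norm_sub_le _ _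
    _ ≤ _ := by gcongr

theorem sum_range_sq_norm_le_of_norm_sum_le {c : ℕ → ℂ} {N : ℕ} {M : ℝ}
    (h : ∀ w : ℂ, ‖w‖ = 1 → ‖∑ k ∈ range N, c k * w ^ k‖ ≤ M) :
    ∑ k ∈ range N, ‖c k‖ ^ 2 ≤ M ^ 2 := by
  set p : ℂ[X] := ∑ k ∈ range N, C (c k) * X ^ k
  have hcoeff : ∀ i, p.coeff i = if i < N then c i else 0 := by
    intro i
    simp [p, finsetSum_coeff]
  have heval : ∀ w, p.eval w = ∑ k ∈ range N, c k * w ^ k := by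
    intro w
    simp [p, eval_finsetSum]
  have hsupp : p.support ⊆ range N := fun i hi => by
    rw [mem_support_iff, hcoeff] at hi
    exact mem_range.2 (by by_contra h; simp [h] at hi)
  have hparseval : ∑ k ∈ range N, ‖c k‖ ^ 2 = Real.circleAverage (fun w ↦ ‖p.eval w‖ ^ 2) 0 1 := by
    rw [← p.sum_sq_norm_coeff_eq_circleAverage, sum_subset hsupp]
    · exact sum_congr rfl fun i hi => by rw [hcoeff, if_pos (mem_range.1 hi)]
    · intro i _ hi
      rw [notMem_support_iff.1 hi, norm_zero, sq, mul_zero]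
  rw [hparseval]
  refine Real.circleAverage_mono_on_of_le_circle ?_ fun w hw => ?_
  · exact (by fun_prop : Continuous fun w ↦ ‖p.eval w‖ ^ 2).continuousOn.circleIntegrable'
  · rw [heval]
    exact pow_le_pow_left₀ (norm_nonneg _) (h w (by simpa using hw)) 2

theorem sum_range_sq_norm_mul_pow_le {f : ℂ → ℂ} {a : ℕ → ℂ} {M s : ℝ}
    (hrep : ∀ z ∈ Metric.ball (0 : ℂ) 1, HasSum (fun k => a k * z ^ k) (f z))
    (hbd : ∀ z ∈ Metric.ball (0 : ℂ) 1, ‖f z‖ ≤ M) (hs0 : 0 ≤ s) (hs1 : s < 1) (n : ℕ) :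
    ∑ k ∈ range n, (‖a k‖ * s ^ k) ^ 2 ≤ M ^ 2 := by
  have hmid : (((1 + s) / 2 : ℝ) : ℂ) ∈ Metric.ball (0 : ℂ) 1 := by
    rw [mem_ball_zero_iff, norm_real, Real.norm_of_nonneg (by linarith)]
    linarith
  have hsum : Summable fun k => ‖a k‖ * s ^ k :=
    summable_norm_mul_pow_of_summable_s8 (hrep _ hmid).summable hs0 (by linarith)
  let tail : ℕ → ℝ := fun N => ∑' k, ‖a (k + N)‖ * s ^ (k + N)
  have hbound : ∀ N, ∑ k ∈ range N, (‖a k‖ * s ^ k) ^ 2 ≤ (M + tail N) ^ 2 := by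
    intro N
    have key := sum_range_sq_norm_le_of_norm_sum_le (c := fun k => a k * s ^ k) (N := N)
      (M := M + tail N) fun w hw => ?_
    · simpa [norm_mul, abs_of_nonneg hs0] using key
    have hz : (s : ℂ) * w ∈ Metric.ball (0 : ℂ) 1 := by simpa [hw, abs_of_nonneg hs0] using hs1
    have hnorm : ∀ k, ‖a k * (s * w) ^ k‖ = ‖a k‖ * s ^ k := by
      simp [hw, abs_of_nonneg hs0]
    calc ‖∑ k ∈ range N, a k * s ^ k * w ^ k‖ = ‖∑ k ∈ range N, a k * (s * w) ^ k‖ := by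
          simp_rw [mul_pow, mul_assoc]
      _ ≤ ‖f (s * w)‖ + ∑' k, ‖a (k + N) * (s * w) ^ (k + N)‖ :=
          norm_sum_range_le_add_tsum (hrep _ hz) (hsum.congr fun k => (hnorm k).symm) N
      _ = ‖f (s * w)‖ + tail N := by simp only [hnorm, tail]
      _ ≤ M + tail N := add_le_add_left (hbd _ hz) _
  have hlim : Tendsto (fun N => (M + tail N) ^ 2) atTop (𝓝 (M ^ 2)) := by
    simpa using ((tendsto_sum_nat_add fun k => ‖a k‖ * s ^ k).const_add M).pow 2
  refine ge_of_tendsto hlim (eventually_atTop.2 ⟨n, fun N hnN => ?_⟩)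
  exact (sum_le_sum_of_subset_of_nonneg (range_subset_range.2 hnN)
    fun _ _ _ => by positivity).trans (hbound N)

theorem sum_range_sq_norm_le_of_norm_le {f : ℂ → ℂ} {a : ℕ → ℂ} {M : ℝ}
    (hrep : ∀ z ∈ Metric.ball (0 : ℂ) 1, HasSum (fun k => a k * z ^ k) (f z))
    (hbd : ∀ z ∈ Metric.ball (0 : ℂ) 1, ‖f z‖ ≤ M) (n : ℕ) :
    ∑ k ∈ range n, ‖a k‖ ^ 2 ≤ M ^ 2 := by
  have hcont : Tendsto (fun s : ℝ => ∑ k ∈ range n, (‖a k‖ * s ^ k) ^ 2) (𝓝[<] 1)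
      (𝓝 (∑ k ∈ range n, ‖a k‖ ^ 2)) := by
    simpa using ((by fun_prop : Continuous fun s : ℝ => ∑ k ∈ range n, (‖a k‖ * s ^ k) ^ 2).tendsto
      1).mono_left nhdsWithin_le_nhds
  refine le_of_tendsto hcont ?_
  filter_upwards [Ioo_mem_nhdsLT zero_lt_one] with s hs
  exact sum_range_sq_norm_mul_pow_le hrep hbd hs.1.le hs.2 n

theorem sum_range_sq_pow_succ_le {r : ℝ} (hr0 : 0 ≤ r) (hr1 : r < 1) (n : ℕ) :
    ∑ k ∈ range n, (r ^ (k + 1)) ^ 2 ≤ r ^ 2 / (1 - r ^ 2) := by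
  have h := geom_sum_Ico_le_of_lt_one (m := 0) (n := n) (sq_nonneg r) (by nlinarith : r ^ 2 < 1)
  rw [← range_eq_Ico, pow_zero] at h
  calc ∑ k ∈ range n, (r ^ (k + 1)) ^ 2 = r ^ 2 * ∑ k ∈ range n, (r ^ 2) ^ k := by
        rw [mul_sum]; exact sum_congr rfl fun k _ => by ring
    _ ≤ r ^ 2 * (1 / (1 - r ^ 2)) := by gcongr
    _ = r ^ 2 / (1 - r ^ 2) := by ring

theorem tsum_mul_pow_succ_le_of_sum_sq_le_s8 {b : ℕ → ℝ} {B r : ℝ} (hb0 : ∀ k, 0 ≤ b k)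
    (hb : ∀ n, ∑ k ∈ range n, b k ^ 2 ≤ B) (hr0 : 0 ≤ r) (hr1 : r < 1) :
    ∑' k, b k * r ^ (k + 1) ≤ r * √B / √(1 - r ^ 2) := by
  refine Real.tsum_le_of_sum_range_le (fun k => mul_nonneg (hb0 k) (pow_nonneg hr0 _)) fun n => ?_
  calc ∑ k ∈ range n, b k * r ^ (k + 1)
      ≤ √(∑ k ∈ range n, b k ^ 2) * √(∑ k ∈ range n, (r ^ (k + 1)) ^ 2) :=
        Real.sum_mul_le_sqrt_mul_sqrt _ _ _
    _ ≤ √B * √(r ^ 2 / (1 - r ^ 2)) := by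
        gcongr
        exacts [hb n, sum_range_sq_pow_succ_le hr0 hr1 n]
    _ = r * √B / √(1 - r ^ 2) := by
        rw [Real.sqrt_div' _ (by nlinarith), Real.sqrt_sq hr0]; ring

theorem tail_estimate_small_general (f : ℂ → ℂ) (a : ℕ → ℂ)
    (hrep : ∀ z ∈ Metric.ball (0 : ℂ) 1, HasSum (fun k : ℕ => a k * z ^ k) (f z))
    (hbd : ∀ z ∈ Metric.ball (0 : ℂ) 1, ‖f z‖ ≤ 1)
    (r : ℝ) (hr0 : 0 < r) (hr1 : r < 1) :
    ∑' k : ℕ, ‖a (k + 1)‖ * r ^ (k + 1) ≤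
      r * Real.sqrt (1 - ‖a 0‖ ^ 2) / Real.sqrt (1 - r ^ 2) := by
  refine tsum_mul_pow_succ_le_of_sum_sq_le_s8 (fun k => norm_nonneg _) (fun n => ?_) hr0.le hr1
  have h := sum_range_sq_norm_le_of_norm_le hrep hbd (n + 1)
  rw [sum_range_succ', one_pow] at h
  linarith

/-- Tail estimate, case `|a₀| < r`: `Σ_{k≥1} |a_k| r^k ≤ r √(1-|a₀|²)/√(1-r²)`. -/
theorem tail_estimate_small (f : ℂ → ℂ) (a : ℕ → ℂ)
    (hf : AnalyticOn ℂ f (Metric.ball (0 : ℂ) 1))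
    (hrep : ∀ z ∈ Metric.ball (0 : ℂ) 1, HasSum (fun k : ℕ => a k * z ^ k) (f z))
    (hbd : ∀ z ∈ Metric.ball (0 : ℂ) 1, ‖f z‖ ≤ 1)
    (r : ℝ) (hr0 : 0 < r) (hr1 : r < 1) (ha0 : ‖a 0‖ < r) :
    ∑' k : ℕ, ‖a (k + 1)‖ * r ^ (k + 1) ≤
      r * Real.sqrt (1 - ‖a 0‖ ^ 2) / Real.sqrt (1 - r ^ 2) :=
  tail_estimate_small_general f a hrep hbd r hr0 hr1
end

section
/- Suppose f(z) = Σ_{k=0}^∞ a_k z^k is analytic on the unit disk with |f(z)| < 1. Then for |z| = r ≤ √5 − 2, |f(z)| + Σ_{k=1}^∞ |a_k| r^k ≤ 1. -/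
/-!
By the Schwarz–Pick lemma, `‖f z‖ ≤ (‖a 0‖ + r) / (1 + ‖a 0‖ * r)`. For `k ≥ 1` the multisection
`w ↦ ∑ a (k m) w ^ m` is the mean of `f` over the `k`-th roots of `w`, hence again a self-map of the
disk; the Schwarz–Pick bound on its derivative at `0` is Wiener's inequality
`‖a k‖ ≤ 1 - ‖a 0‖ ^ 2`, so the tail is at most `(1 - ‖a 0‖ ^ 2) r / (1 - r)`. The two bounds add up
to at most `1` as soon as `(1 + A) r (1 + A r) ≤ (1 - r) ^ 2` for `A = ‖a 0‖`, and uniformly in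
`A ≤ 1` this is `r ^ 2 + 4 r ≤ 1`, i.e. `r ≤ √5 - 2`.
-/

open Metric Set Complex ComplexConjugate

noncomputable def mobius (a w : ℂ) : ℂ := (a - w) / (1 - conj a * w)

lemma one_sub_conj_mul_ne_zero {a w : ℂ} (ha : ‖a‖ < 1) (hw : ‖w‖ ≤ 1) :
    1 - conj a * w ≠ 0 := by
  refine sub_ne_zero.2 fun h => ?_
  have : ‖conj a * w‖ < 1 := by
    rw [norm_mul, RCLike.norm_conj]
    nlinarith [norm_nonneg a, norm_nonneg w]
  simp [← h] at this

lemma norm_one_sub_conj_mul_sq_sub_norm_sub_sq (a w : ℂ) :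
    ‖1 - conj a * w‖ ^ 2 - ‖a - w‖ ^ 2 = (1 - ‖a‖ ^ 2) * (1 - ‖w‖ ^ 2) := by
  simp only [Complex.sq_norm, normSq_apply, sub_re, sub_im, mul_re, mul_im, conj_re, conj_im,
    one_re, one_im]
  ring

lemma norm_mobius_lt_one {a w : ℂ} (ha : ‖a‖ < 1) (hw : ‖w‖ < 1) : ‖mobius a w‖ < 1 := by
  have hD := norm_pos_iff.2 (one_sub_conj_mul_ne_zero ha hw.le)
  rw [mobius, norm_div, div_lt_one hD, ← sq_lt_sq₀ (norm_nonneg _) hD.le]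
  have := norm_one_sub_conj_mul_sq_sub_norm_sub_sq a w
  have : 0 < (1 - ‖a‖ ^ 2) * (1 - ‖w‖ ^ 2) := by
    apply mul_pos <;> nlinarith [norm_nonneg a, norm_nonneg w]
  linarith

lemma mapsTo_mobius {a : ℂ} (ha : ‖a‖ < 1) : MapsTo (mobius a) (ball 0 1) (ball 0 1) :=
  fun _ hw => mem_ball_zero_iff.2 (norm_mobius_lt_one ha (mem_ball_zero_iff.1 hw))

@[simp] lemma mobius_self (a : ℂ) : mobius a a = 0 := by simp [mobius]

lemma one_sub_conj_mul_mobius {a w : ℂ} (hD : 1 - conj a * w ≠ 0) :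
    1 - conj a * mobius a w = (1 - conj a * a) / (1 - conj a * w) := by
  rw [mobius]
  field_simp
  ring

lemma mobius_mobius {a w : ℂ} (ha : ‖a‖ < 1) (hw : ‖w‖ < 1) : mobius a (mobius a w) = w := by
  have hD := one_sub_conj_mul_ne_zero ha hw.le
  have ha' := one_sub_conj_mul_ne_zero ha ha.le
  rw [mobius, one_sub_conj_mul_mobius hD, mobius, sub_div' hD, div_div_div_cancel_right₀ hD,
    div_eq_iff ha']
  ring

lemma norm_mobius_le {a w : ℂ} (ha : ‖a‖ < 1) (hw : ‖w‖ < 1) :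
    ‖mobius a w‖ ≤ (‖a‖ + ‖w‖) / (1 + ‖a‖ * ‖w‖) := by
  have hD := norm_pos_iff.2 (one_sub_conj_mul_ne_zero ha hw.le)
  have hD' : ‖1 - conj a * w‖ ≤ 1 + ‖a‖ * ‖w‖ := by
    simpa using norm_sub_le (1 : ℂ) (conj a * w)
  have hid := norm_one_sub_conj_mul_sq_sub_norm_sub_sq a w
  have h0 : 0 ≤ (1 - ‖a‖ ^ 2) * (1 - ‖w‖ ^ 2) := by
    apply mul_nonneg <;> nlinarith [norm_nonneg a, norm_nonneg w]
  rw [mobius, norm_div, div_le_div_iff₀ hD (by positivity),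
    ← sq_le_sq₀ (by positivity) (by positivity)]
  nlinarith [mul_le_mul hD' hD' hD.le (by positivity)]

lemma hasDerivAt_mobius {a w : ℂ} (hD : 1 - conj a * w ≠ 0) :
    HasDerivAt (mobius a) ((conj a * a - 1) / (1 - conj a * w) ^ 2) w := by
  refine (((hasDerivAt_id w).const_sub a).div
    (((hasDerivAt_id w).const_mul (conj a)).const_sub 1) hD).congr_deriv ?_
  simp only [id]
  ring

lemma add_div_one_add_mul_le_of_le {A s t : ℝ} (hA0 : 0 ≤ A) (hA1 : A ≤ 1) (hs : 0 ≤ s)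
    (hst : s ≤ t) : (A + s) / (1 + A * s) ≤ (A + t) / (1 + A * t) := by
  rw [div_le_div_iff₀ (by positivity) (by nlinarith)]
  nlinarith [mul_nonneg (sub_nonneg.2 hst) (by nlinarith : 0 ≤ 1 - A ^ 2)]

section SchwarzPick

variable {g : ℂ → ℂ}

lemma differentiableOn_mobius_comp (hd : DifferentiableOn ℂ g (ball 0 1))
    (hg : MapsTo g (ball 0 1) (ball 0 1)) {a : ℂ} (ha : ‖a‖ < 1) :
    DifferentiableOn ℂ (mobius a ∘ g) (ball 0 1) := fun w hw =>
  (hasDerivAt_mobius (one_sub_conj_mul_ne_zero ha (mem_ball_zero_iff.1 (hg hw)).le)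
    ).differentiableAt.comp_differentiableWithinAt w (hd w hw)

theorem norm_apply_le_of_mapsTo_ball (hd : DifferentiableOn ℂ g (ball 0 1))
    (hg : MapsTo g (ball 0 1) (ball 0 1)) {z : ℂ} (hz : z ∈ ball 0 1) :
    ‖g z‖ ≤ (‖g 0‖ + ‖z‖) / (1 + ‖g 0‖ * ‖z‖) := by
  set a := g 0
  have ha : ‖a‖ < 1 := mem_ball_zero_iff.1 (hg (mem_ball_self one_pos))
  have hgz : ‖g z‖ < 1 := mem_ball_zero_iff.1 (hg hz)
  have hschwarz : ‖mobius a (g z)‖ ≤ ‖z‖ :=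
    norm_le_norm_of_mapsTo_ball (differentiableOn_mobius_comp hd hg ha)
      (((mapsTo_mobius ha).comp hg).mono_right ball_subset_closedBall) (mobius_self a)
      (mem_ball_zero_iff.1 hz)
  calc ‖g z‖ = ‖mobius a (mobius a (g z))‖ := by rw [mobius_mobius ha hgz]
    _ ≤ (‖a‖ + ‖mobius a (g z)‖) / (1 + ‖a‖ * ‖mobius a (g z)‖) :=
      norm_mobius_le ha (norm_mobius_lt_one ha hgz)
    _ ≤ (‖a‖ + ‖z‖) / (1 + ‖a‖ * ‖z‖) :=
      add_div_one_add_mul_le_of_le (norm_nonneg _) ha.le (norm_nonneg _) hschwarz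

theorem norm_deriv_zero_le_of_mapsTo_ball (hd : DifferentiableOn ℂ g (ball 0 1))
    (hg : MapsTo g (ball 0 1) (ball 0 1)) : ‖deriv g 0‖ ≤ 1 - ‖g 0‖ ^ 2 := by
  set a := g 0
  have h0 : (0 : ℂ) ∈ ball 0 1 := mem_ball_self one_pos
  have ha : ‖a‖ < 1 := mem_ball_zero_iff.1 (hg h0)
  have hpos : 0 < 1 - ‖a‖ ^ 2 := by nlinarith [norm_nonneg a]
  have hF : HasDerivAt (mobius a ∘ g) ((conj a * a - 1) / (1 - conj a * a) ^ 2 * deriv g 0) 0 :=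
    (hasDerivAt_mobius (one_sub_conj_mul_ne_zero ha ha.le)).comp 0
      (hd.differentiableAt (isOpen_ball.mem_nhds h0)).hasDerivAt
  have hschwarz := norm_deriv_le_one_of_mapsTo_ball (differentiableOn_mobius_comp hd hg ha)
    (show MapsTo _ _ (closedBall (mobius a a) 1) by
      simpa using ((mapsTo_mobius ha).comp hg).mono_right ball_subset_closedBall) one_pos
  have hfactor : (conj a * a - 1) / (1 - conj a * a) ^ 2 = -(((1 - ‖a‖ ^ 2 : ℝ) : ℂ)⁻¹) := by
    have : ((1 - ‖a‖ ^ 2 : ℝ) : ℂ) ≠ 0 := ofReal_ne_zero.2 hpos.ne'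
    rw [conj_mul']
    push_cast at this ⊢
    field_simp
    ring
  rw [hF.deriv, hfactor, norm_mul, norm_neg, norm_inv, norm_real, Real.norm_of_nonneg hpos.le,
    inv_mul_le_iff₀ hpos, mul_one] at hschwarz
  exact hschwarz

end SchwarzPick

lemma eball_zero_one_eq_ball : eball (0 : ℂ) 1 = ball 0 1 := by
  rw [← ENNReal.ofReal_one, eball_ofReal]

theorem hasFPowerSeriesOnBall_ofScalars_of_hasSum {c : ℕ → ℂ} {g : ℂ → ℂ}
    (hg : ∀ w ∈ ball (0 : ℂ) 1, HasSum (fun n => c n * w ^ n) (g w)) :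
    HasFPowerSeriesOnBall g (FormalMultilinearSeries.ofScalars ℂ c) 0 1 where
  r_le := by
    refine ENNReal.le_of_forall_nnreal_lt fun ρ hρ => ?_
    refine FormalMultilinearSeries.le_radius_of_tendsto _ (l := 0) ?_
    have hmem : (ρ : ℂ) ∈ ball 0 1 := by simpa using hρ
    simpa [FormalMultilinearSeries.ofScalars_norm] using
      (hg _ hmem).summable.tendsto_atTop_zero.norm
  r_pos := one_pos
  hasSum := fun hy => by
    simpa [FormalMultilinearSeries.ofScalars_apply_eq, mul_comm] using
      hg _ (eball_zero_one_eq_ball ▸ hy)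

lemma apply_zero_eq_of_hasSum {c : ℕ → ℂ} {g : ℂ → ℂ}
    (hg : ∀ w ∈ ball (0 : ℂ) 1, HasSum (fun n => c n * w ^ n) (g w)) : g 0 = c 0 := by
  simpa using
    ((hasFPowerSeriesOnBall_ofScalars_of_hasSum hg).hasFPowerSeriesAt.coeff_zero ![]).symm

lemma differentiableOn_of_hasSum {c : ℕ → ℂ} {g : ℂ → ℂ}
    (hg : ∀ w ∈ ball (0 : ℂ) 1, HasSum (fun n => c n * w ^ n) (g w)) :
    DifferentiableOn ℂ g (ball 0 1) :=
  eball_zero_one_eq_ball ▸ (hasFPowerSeriesOnBall_ofScalars_of_hasSum hg).differentiableOn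

theorem norm_le_of_hasSum {c : ℕ → ℂ} {g : ℂ → ℂ}
    (hg : ∀ w ∈ ball (0 : ℂ) 1, HasSum (fun n => c n * w ^ n) (g w))
    (hmaps : MapsTo g (ball 0 1) (ball 0 1)) {z : ℂ} (hz : z ∈ ball 0 1) :
    ‖g z‖ ≤ (‖c 0‖ + ‖z‖) / (1 + ‖c 0‖ * ‖z‖) := by
  simpa [apply_zero_eq_of_hasSum hg] using
    norm_apply_le_of_mapsTo_ball (differentiableOn_of_hasSum hg) hmaps hz

theorem norm_coeff_one_le_of_hasSum {c : ℕ → ℂ} {g : ℂ → ℂ}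
    (hg : ∀ w ∈ ball (0 : ℂ) 1, HasSum (fun n => c n * w ^ n) (g w))
    (hmaps : MapsTo g (ball 0 1) (ball 0 1)) : ‖c 1‖ ≤ 1 - ‖c 0‖ ^ 2 := by
  have h1 : deriv g 0 = c 1 := by
    simpa using (hasFPowerSeriesOnBall_ofScalars_of_hasSum hg).hasFPowerSeriesAt.deriv
  simpa [apply_zero_eq_of_hasSum hg, h1] using
    norm_deriv_zero_le_of_mapsTo_ball (differentiableOn_of_hasSum hg) hmaps

theorem IsPrimitiveRoot.sum_pow_pow {R : Type*} [CommRing R] [IsDomain R] {ω : R} {k : ℕ}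
    (hω : IsPrimitiveRoot ω k) (n : ℕ) :
    ∑ j ∈ Finset.range k, (ω ^ j) ^ n = if k ∣ n then (k : R) else 0 := by
  simp_rw [← pow_mul, mul_comm _ n, pow_mul]
  split_ifs with hkn
  · simp [(hω.pow_eq_one_iff_dvd n).2 hkn]
  · have hne : ω ^ n - 1 ≠ 0 := sub_ne_zero.2 fun h => hkn ((hω.pow_eq_one_iff_dvd n).1 h)
    refine (mul_eq_zero.1 ?_).resolve_right hne
    rw [geom_sum_mul, ← pow_mul, mul_comm, pow_mul, hω.pow_eq_one, one_pow, sub_self]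

theorem IsPrimitiveRoot.hasSum_multisection {f : ℂ → ℂ} {a : ℕ → ℂ} {k : ℕ} {ω ζ : ℂ}
    (hω : IsPrimitiveRoot ω k) (hk : 0 < k)
    (hf : ∀ j ∈ Finset.range k, HasSum (fun n => a n * (ω ^ j * ζ) ^ n) (f (ω ^ j * ζ))) :
    HasSum (fun m => a (k * m) * (ζ ^ k) ^ m)
      ((k : ℂ)⁻¹ * ∑ j ∈ Finset.range k, f (ω ^ j * ζ)) := by
  have hsum := (hasSum_sum hf).mul_left (k : ℂ)⁻¹
  have hterm : ∀ n, (k : ℂ)⁻¹ * ∑ j ∈ Finset.range k, a n * (ω ^ j * ζ) ^ n =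
      if k ∣ n then a n * ζ ^ n else 0 := by
    intro n
    have hsplit : ∀ j, a n * (ω ^ j * ζ) ^ n = a n * ζ ^ n * (ω ^ j) ^ n := fun j => by ring
    simp_rw [hsplit, ← Finset.mul_sum, hω.sum_pow_pow]
    split_ifs
    · field_simp [Nat.cast_ne_zero.2 hk.ne']
    · simp
  simp_rw [hterm] at hsum
  rw [← (mul_right_injective₀ hk.ne').hasSum_iff fun n hn => if_neg fun ⟨m, hm⟩ => hn ⟨m, hm.symm⟩]
    at hsum
  simpa [Function.comp_def, ← pow_mul] using hsum

theorem norm_coeff_le_one_sub_norm_sq {f : ℂ → ℂ} {a : ℕ → ℂ}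
    (hrep : ∀ z ∈ ball (0 : ℂ) 1, HasSum (fun n => a n * z ^ n) (f z))
    (hf : MapsTo f (ball 0 1) (ball 0 1)) {k : ℕ} (hk : 0 < k) : ‖a k‖ ≤ 1 - ‖a 0‖ ^ 2 := by
  obtain ⟨ω, hω⟩ : ∃ ω : ℂ, IsPrimitiveRoot ω k := ⟨_, isPrimitiveRoot_exp k hk.ne'⟩
  have hsection : ∀ w ∈ ball (0 : ℂ) 1,
      ∃ s ∈ ball (0 : ℂ) 1, HasSum (fun m => a (k * m) * w ^ m) s := by
    intro w hw
    obtain ⟨ζ, rfl⟩ := IsAlgClosed.exists_pow_nat_eq w hk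
    have hζ : ∀ j, ω ^ j * ζ ∈ ball (0 : ℂ) 1 := by
      intro j
      rw [mem_ball_zero_iff, norm_pow, pow_lt_one_iff_of_nonneg (norm_nonneg _) hk.ne'] at hw
      simpa [hω.norm'_eq_one hk.ne'] using hw
    refine ⟨_, ?_, hω.hasSum_multisection hk fun j _ => hrep _ (hζ j)⟩
    have hk' : (0 : ℝ) < k := Nat.cast_pos.2 hk
    have hmean := (convex_ball (0 : ℂ) 1).sum_mem (t := Finset.range k) (w := fun _ => (k : ℝ)⁻¹)
      (fun _ _ => by positivity) (by simp [hk'.ne']) fun j _ => hf (hζ j)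
    simpa [Complex.real_smul, ← Finset.mul_sum] using hmean
  have hg : ∀ w ∈ ball (0 : ℂ) 1, HasSum (fun m => a (k * m) * w ^ m) (∑' m, a (k * m) * w ^ m) :=
    fun w hw => (hsection w hw).elim fun _ h => h.2.summable.hasSum
  have hmaps : MapsTo (fun w => ∑' m, a (k * m) * w ^ m) (ball 0 1) (ball 0 1) := by
    intro w hw
    obtain ⟨s, hs, hsum⟩ := hsection w hw
    simpa [hsum.tsum_eq] using hs
  simpa using norm_coeff_one_le_of_hasSum hg hmaps

theorem tsum_norm_mul_pow_succ_le {E : Type*} [SeminormedAddCommGroup E] {a : ℕ → E} {B r : ℝ}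
    (hr0 : 0 ≤ r) (hr1 : r < 1) (ha : ∀ k, 0 < k → ‖a k‖ ≤ B) :
    ∑' k, ‖a (k + 1)‖ * r ^ (k + 1) ≤ B * (r / (1 - r)) := by
  have hgeom : HasSum (fun k : ℕ => B * r ^ (k + 1)) (B * (r / (1 - r))) := by
    simpa [pow_succ', mul_assoc, div_eq_mul_inv] using
      ((hasSum_geometric_of_lt_one hr0 hr1).mul_left r).mul_left B
  have hle : ∀ k : ℕ, ‖a (k + 1)‖ * r ^ (k + 1) ≤ B * r ^ (k + 1) := fun k =>
    mul_le_mul_of_nonneg_right (ha _ k.succ_pos) (by positivity)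
  exact hasSum_le hle
    (Summable.of_nonneg_of_le (fun _ => by positivity) hle hgeom.summable).hasSum hgeom

theorem bohr_majorant_le_one {A r : ℝ} (hA0 : 0 ≤ A) (hA1 : A ≤ 1)
    (hr0 : 0 ≤ r) (hr : r ≤ √5 - 2) :
    (A + r) / (1 + A * r) + (1 - A ^ 2) * (r / (1 - r)) ≤ 1 := by
  have h5 : √5 ^ 2 = 5 := Real.sq_sqrt (by norm_num)
  have hr1 : r < 1 := by nlinarith [Real.sqrt_nonneg 5]
  have hkey : r ^ 2 + 4 * r ≤ 1 := by nlinarith [Real.sqrt_nonneg 5]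
  have hAr : (1 + A) * r * (1 + A * r) ≤ (1 - r) ^ 2 := by
    nlinarith [mul_nonneg (mul_nonneg hr0 (sub_nonneg.2 hA1)) (by positivity : 0 ≤ 1 + r * (2 + A))]
  rw [mul_div_assoc', div_add_div _ _ (by positivity) (by linarith), div_le_one (by nlinarith)]
  nlinarith [mul_nonneg (sub_nonneg.2 hA1) (sub_nonneg.2 hAr)]

theorem bohr_with_f_general (f : ℂ → ℂ) (a : ℕ → ℂ)
    (hrep : ∀ z ∈ Metric.ball (0 : ℂ) 1, HasSum (fun k : ℕ => a k * z ^ k) (f z))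
    (hbd : ∀ z ∈ Metric.ball (0 : ℂ) 1, ‖f z‖ < 1)
    (z : ℂ) (r : ℝ) (hz : ‖z‖ = r) (hr : r ≤ Real.sqrt 5 - 2) :
    ‖f z‖ + ∑' k : ℕ, ‖a (k + 1)‖ * r ^ (k + 1) ≤ 1 := by
  have hmaps : MapsTo f (ball 0 1) (ball 0 1) := fun w hw => mem_ball_zero_iff.2 (hbd w hw)
  have hr0 : 0 ≤ r := hz ▸ norm_nonneg z
  have hr1 : r < 1 := hr.trans_lt (by nlinarith [Real.sq_sqrt (show (0 : ℝ) ≤ 5 by norm_num)])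
  have hz1 : z ∈ ball (0 : ℂ) 1 := mem_ball_zero_iff.2 (hz ▸ hr1)
  have ha0 : ‖a 0‖ < 1 := apply_zero_eq_of_hasSum hrep ▸ hbd 0 (mem_ball_self one_pos)
  calc ‖f z‖ + ∑' k : ℕ, ‖a (k + 1)‖ * r ^ (k + 1)
      ≤ (‖a 0‖ + r) / (1 + ‖a 0‖ * r) + (1 - ‖a 0‖ ^ 2) * (r / (1 - r)) :=
        add_le_add (hz ▸ norm_le_of_hasSum hrep hmaps hz1)
          (tsum_norm_mul_pow_succ_le hr0 hr1 fun _ => norm_coeff_le_one_sub_norm_sq hrep hmaps)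
    _ ≤ 1 := bohr_majorant_le_one (norm_nonneg _) ha0.le hr0 hr

/-- `|f(z)| + Σ_{k≥1} |a_k| r^k ≤ 1` for `|z| = r ≤ √5 - 2`. -/
theorem bohr_with_f (f : ℂ → ℂ) (a : ℕ → ℂ)
    (hf : AnalyticOn ℂ f (Metric.ball (0 : ℂ) 1))
    (hrep : ∀ z ∈ Metric.ball (0 : ℂ) 1, HasSum (fun k : ℕ => a k * z ^ k) (f z))
    (hbd : ∀ z ∈ Metric.ball (0 : ℂ) 1, ‖f z‖ < 1)
    (z : ℂ) (r : ℝ) (hz : ‖z‖ = r) (hr : r ≤ Real.sqrt 5 - 2) :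
    ‖f z‖ + ∑' k : ℕ, ‖a (k + 1)‖ * r ^ (k + 1) ≤ 1 :=
  bohr_with_f_general f a hrep hbd z r hz hr
end

section
/- The constant p = 2(√5 − 1) in the area-refined Bohr-type inequality |f(z)| + Σ_{k≥1} |a_k| r^k + p(S_r/π) ≤ 1 at r = √5 − 2 is sharp: for every ε > 0 there exists a ∈ (0,1) such that for f(z) = (z + a)/(1 + a z) and z = r = √5 − 2, |f(r)| + Σ_{k=1}^∞ |a_k| r^k + (p + ε)(S_r/π) > 1. -/
/-!
With `r = √5 - 2` one has `r² + 4r = 1`, and for the disc automorphism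
`f(z) = (z + a)/(1 + az)` the Bohr sum plus `q · S_r/π`, minus `1`, factors as
`(1 - a)² r B(a) / (1 - a²r²)²` with `B(a) = q r (1 + a)² - (r(1 + a) + 2)(1 - a²r²)`.
For `q = p + ε = 2(r + 1) + ε` the relation `r² + 4r = 1` gives `B(1) = 4rε > 0`,
so by continuity `B(a) > 0` for every `a < 1` close enough to `1`.
-/

open Filter Topology Set

theorem tsum_mul_pow_mul_pow_succ {a r : ℝ} (c : ℝ) (h : |a * r| < 1) :
    ∑' k : ℕ, c * a ^ k * r ^ (k + 1) = c * r / (1 - a * r) := by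
  have hterm (k : ℕ) : c * a ^ k * r ^ (k + 1) = c * r * (a * r) ^ k := by ring
  rw [tsum_congr hterm, tsum_mul_left, tsum_geometric_of_abs_lt_one h, div_eq_mul_inv]

theorem blaschke_bohr_area_sub_one {a r : ℝ} (q : ℝ) (hr : r ^ 2 + 4 * r = 1)
    (hplus : 1 + a * r ≠ 0) (hminus : 1 - a * r ≠ 0) :
    (a + r) / (1 + a * r) + (1 - a ^ 2) * r / (1 - a * r)
        + q * (r ^ 2 * (1 - a ^ 2) ^ 2 / (1 - a ^ 2 * r ^ 2) ^ 2) - 1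
      = (1 - a) ^ 2 * r * (q * r * (1 + a) ^ 2 - (r * (1 + a) + 2) * (1 - a ^ 2 * r ^ 2))
          / (1 - a ^ 2 * r ^ 2) ^ 2 := by
  have hfac : 1 - a ^ 2 * r ^ 2 = (1 - a * r) * (1 + a * r) := by ring
  rw [hfac]
  field_simp
  linear_combination (1 - a) * (1 - a * r) * (1 + a * r) * hr

/-- Sharpness of `p = 2(√5 - 1)` in Theorem 3, witnessed by `f(z) = (z+a)/(1+az)`
at `r = √5 - 2`. -/
theorem bohr_f_area_p_sharp (ε : ℝ) (hε : 0 < ε) :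
    ∃ a : ℝ, 0 < a ∧ a < 1 ∧
      (let r := Real.sqrt 5 - 2
       (a + r) / (1 + a * r) + (∑' k : ℕ, (1 - a ^ 2) * a ^ k * r ^ (k + 1)) +
         (2 * (Real.sqrt 5 - 1) + ε) *
           (r ^ 2 * (1 - a ^ 2) ^ 2 / (1 - a ^ 2 * r ^ 2) ^ 2) > 1) := by
  set r := Real.sqrt 5 - 2 with hr_def
  have hsqrt : Real.sqrt 5 ^ 2 = 5 := Real.sq_sqrt (by norm_num)
  have hr : r ^ 2 + 4 * r = 1 := by rw [hr_def]; linear_combination hsqrt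
  have hr0 : 0 < r := by nlinarith [Real.sqrt_nonneg 5]
  have hr1 : r < 1 := by nlinarith
  have hp : 2 * (Real.sqrt 5 - 1) + ε = 2 * (r + 1) + ε := by rw [hr_def]; ring
  set B : ℝ → ℝ := fun a ↦
    (2 * (r + 1) + ε) * r * (1 + a) ^ 2 - (r * (1 + a) + 2) * (1 - a ^ 2 * r ^ 2) with hB_def
  have hB1 : B 1 = 4 * r * ε := by rw [hB_def]; linear_combination 2 * (r + 1) * hr
  have hB : ∀ᶠ a in 𝓝[<] 1, 0 < B a := by
    have hcont : ContinuousAt B 1 := by rw [hB_def]; fun_prop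
    exact nhdsWithin_le_nhds (hcont.eventually (lt_mem_nhds (by rw [hB1]; positivity)))
  obtain ⟨a, hBa, ha0, ha1⟩ := (hB.and (Ioo_mem_nhdsLT zero_lt_one)).exists
  refine ⟨a, ha0, ha1, ?_⟩
  have har0 : 0 < a * r := mul_pos ha0 hr0
  have har1 : a * r < 1 := by nlinarith
  have hden : 0 < 1 - a ^ 2 * r ^ 2 := by nlinarith
  show _ > 1
  rw [tsum_mul_pow_mul_pow_succ _ (abs_lt.2 ⟨by linarith, har1⟩), hp, gt_iff_lt, ← sub_pos,
    blaschke_bohr_area_sub_one _ hr (by linarith) (by linarith)]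
  have hsub : 0 < 1 - a := by linarith
  exact div_pos (mul_pos (mul_pos (pow_pos hsub 2) hr0) hBa) (pow_pos hden 2)
end

section
/- For 0 ≤ a ≤ 1, the inequality (1−a)³ · (7(−9 + 4√5) + 4(−47 + 21√5)a + (−161 + 72√5)a²) ≤ 0 holds; equivalently, with r = √5 − 2, (a + r)/(1 + a r) + r(1 − a²)/(1 − r a) + 2(√5 − 1) · r²(1 − a²)²/(1 − a² r²)² ≤ 1. -/
/-!
Put `r = √5 - 2`, the positive root of `r ^ 2 + 4 * r = 1`. Reducing modulo this relation,
`-9 + 4√5 = -r ^ 2`, `-47 + 21√5 = -r ^ 2 (1 - r)` and `-161 + 72√5 = -r ^ 4`, so the first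
expression is `-r ^ 2 (1 - a) ^ 3 (7 + 4 (1 - r) a + r ^ 2 a ^ 2)`, visibly nonpositive on `[0, 1]`.
Over the common denominator `(1 - a ^ 2 r ^ 2) ^ 2 = ((1 + a r) (1 - r a)) ^ 2`, the left-hand side
of the second inequality minus `1` is exactly that expression divided by `(1 - a ^ 2 r ^ 2) ^ 2`.
-/

open Real

lemma lt_one_of_sq_add_four_mul_eq_one {r : ℝ} (hr : r ^ 2 + 4 * r = 1) : r < 1 := by
  nlinarith

def bohrQuadratic (r a : ℝ) : ℝ := 7 + 4 * (1 - r) * a + r ^ 2 * a ^ 2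

lemma bohrQuadratic_pos {r a : ℝ} (ha : 0 ≤ a) (hr : r ≤ 1) : 0 < bohrQuadratic r a := by
  unfold bohrQuadratic
  have : 0 ≤ 4 * (1 - r) * a := mul_nonneg (by linarith) ha
  positivity

lemma coeffs_eq_neg_sq_mul_bohrQuadratic {s : ℝ} (hs : s ^ 2 = 5) (a : ℝ) :
    7 * (-9 + 4 * s) + 4 * (-47 + 21 * s) * a + (-161 + 72 * s) * a ^ 2 =
      -((s - 2) ^ 2 * bohrQuadratic (s - 2) a) := by
  unfold bohrQuadratic
  linear_combination (7 + 28 * a - 4 * a * s + 29 * a ^ 2 - 8 * a ^ 2 * s + a ^ 2 * s ^ 2) * hs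

lemma bohr_numerator_eq {r : ℝ} (hr : r ^ 2 + 4 * r = 1) (a : ℝ) :
    (a + r) * (1 - a * r) * (1 - a ^ 2 * r ^ 2) + r * (1 - a ^ 2) * (1 + a * r) * (1 - a ^ 2 * r ^ 2)
        + 2 * (r + 1) * r ^ 2 * (1 - a ^ 2) ^ 2 - (1 - a ^ 2 * r ^ 2) ^ 2 =
      -((1 - a) ^ 3 * (r ^ 2 * bohrQuadratic r a)) := by
  unfold bohrQuadratic
  linear_combination (1 + 2 * r - a - 4 * a * r + 2 * a ^ 2 * r + a ^ 2 * r ^ 2 - 3 * a ^ 3 * r ^ 2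
    + 2 * a ^ 4 * r ^ 2) * hr

lemma bohr_sum_sub_one {r a : ℝ} (hr : r ^ 2 + 4 * r = 1) (h₁ : 1 + a * r ≠ 0)
    (h₂ : 1 - r * a ≠ 0) :
    (a + r) / (1 + a * r) + r * (1 - a ^ 2) / (1 - r * a) +
        2 * (r + 1) * (r ^ 2 * (1 - a ^ 2) ^ 2 / (1 - a ^ 2 * r ^ 2) ^ 2) - 1 =
      -((1 - a) ^ 3 * (r ^ 2 * bohrQuadratic r a)) / (1 - a ^ 2 * r ^ 2) ^ 2 := by
  rw [mul_comm r a] at h₂ ⊢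
  have h₃ : 1 - a ^ 2 * r ^ 2 ≠ 0 := by
    rw [show 1 - a ^ 2 * r ^ 2 = (1 + a * r) * (1 - a * r) by ring]
    exact mul_ne_zero h₁ h₂
  rw [← bohr_numerator_eq hr a, eq_div_iff (pow_ne_zero 2 h₃)]
  field_simp
  ring

lemma bohr_numerator_nonneg {r a : ℝ} (hr1 : r ≤ 1) (ha0 : 0 ≤ a) (ha1 : a ≤ 1) :
    0 ≤ (1 - a) ^ 3 * (r ^ 2 * bohrQuadratic r a) := by
  have := bohrQuadratic_pos ha0 hr1
  have : 0 ≤ 1 - a := by linarith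
  positivity

lemma bohr_sum_le_one {r a : ℝ} (hr : r ^ 2 + 4 * r = 1) (hr0 : 0 ≤ r) (ha0 : 0 ≤ a)
    (ha1 : a ≤ 1) :
    (a + r) / (1 + a * r) + r * (1 - a ^ 2) / (1 - r * a) +
      2 * (r + 1) * (r ^ 2 * (1 - a ^ 2) ^ 2 / (1 - a ^ 2 * r ^ 2) ^ 2) ≤ 1 := by
  have hr1 := lt_one_of_sq_add_four_mul_eq_one hr
  have har : r * a < 1 := by nlinarith
  rw [← sub_nonpos, bohr_sum_sub_one hr (by positivity) (by linarith)]
  exact div_nonpos_of_nonpos_of_nonneg (neg_nonpos.2 (bohr_numerator_nonneg hr1.le ha0 ha1))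
    (sq_nonneg _)

/-- The key elementary inequality at `r = √5 - 2`. -/
theorem key_inequality (a : ℝ) (ha0 : 0 ≤ a) (ha1 : a ≤ 1) :
    (1 - a) ^ 3 * (7 * (-9 + 4 * Real.sqrt 5) + 4 * (-47 + 21 * Real.sqrt 5) * a +
      (-161 + 72 * Real.sqrt 5) * a ^ 2) ≤ 0 ∧
    (let r := Real.sqrt 5 - 2
     (a + r) / (1 + a * r) + r * (1 - a ^ 2) / (1 - r * a) +
       2 * (Real.sqrt 5 - 1) * (r ^ 2 * (1 - a ^ 2) ^ 2 / (1 - a ^ 2 * r ^ 2) ^ 2) ≤ 1) := by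
  have hs : √5 ^ 2 = 5 := sq_sqrt (by norm_num)
  have hr : (√5 - 2) ^ 2 + 4 * (√5 - 2) = 1 := by linear_combination hs
  have hr0 : 0 ≤ √5 - 2 := by nlinarith [sqrt_nonneg 5]
  constructor
  · rw [coeffs_eq_neg_sq_mul_bohrQuadratic hs, mul_neg, neg_nonpos]
    exact bohr_numerator_nonneg (lt_one_of_sq_add_four_mul_eq_one hr).le ha0 ha1
  · simpa only [show √5 - 2 + 1 = √5 - 1 by ring] using bohr_sum_le_one hr hr0 ha0 ha1
end
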